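/- arXiv:math/0307227 — 7 statements merged into one kernel-verified Lean document; each statement's English description precedes it below -/
import Mathlib

section
/- For every integer k ≥ 2, set K = (k−1)(k−2)/2 and N = (k−1)(k+2)/2. Then there exist an N × (K+N) integer matrix E and an N × 2k integer matrix B such that for all λ, β ∈ ℤ^k with λ₁ ≥ λ₂ ≥ ⋯ ≥ λ_k and λ₁+⋯+λ_k = β₁+⋯+β_k = 0, the set {s ∈ ℕ^{K+N} : E·s = B·(λ₁,…,λ_k,β₁,…,β_k)} is finite and its cardinality equals the weight multiplicity m_λ(β), i.e. the number of Gelfand–Tsetlin patterns with top row λ and weight β. (In other words, the weight multiplicity function of sl_k is a single vector partition function composed with a linear map.) -/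
/-- A Gelfand–Tsetlin pattern with top row `lam : Fin k → ℤ`, encoded as a function
`x : ℕ → ℕ → ℤ` where row `i` (for `i < k`) has entries `x i 0, …, x i i`
(so row `i` is the row of length `i+1` of the pattern, the top row being row `k-1`),
and all entries outside the triangle are `0`. -/
def IsGTPattern (k : ℕ) (lam : Fin k → ℤ) (x : ℕ → ℕ → ℤ) : Prop :=
  (∀ j : Fin k, x (k - 1) j.1 = lam j) ∧
  (∀ i j : ℕ, i + 1 < k → j ≤ i →
      x i j ≤ x (i + 1) j ∧ x (i + 1) (j + 1) ≤ x i j) ∧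
  (∀ i j : ℕ, k ≤ i ∨ i < j → x i j = 0)

/-- The pattern `x` has weight `beta`: the sum of the row of length `m+1`
equals `beta 0 + ⋯ + beta m`. -/
def GTHasWeight (k : ℕ) (beta : Fin k → ℤ) (x : ℕ → ℕ → ℤ) : Prop :=
  ∀ m : Fin k, (∑ j ∈ Finset.range (m.1 + 1), x m.1 j)
    = ∑ j : Fin k, if j.1 ≤ m.1 then beta j else 0

/-- The weight multiplicity `m_λ(β)`: the number of Gelfand–Tsetlin patterns with
top row `lam` and weight `beta`. -/
noncomputable def gtMult (k : ℕ) (lam beta : Fin k → ℤ) : ℕ :=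
  Set.ncard {x : ℕ → ℕ → ℤ | IsGTPattern k lam x ∧ GTHasWeight k beta x}

/-!
A Gelfand–Tsetlin pattern with top row `λ` is determined by its gaps `x^{(i+1)}_j - x^{(i)}_j`
and `x^{(i)}_j - x^{(i+1)}_{j+1}` at the `(k-1)k/2` entries below the top row, and interlacing says
exactly that these `(k-1)k` integers are nonnegative. Reading the pattern off `λ` and the first
family of gaps, a vector of gaps comes from a pattern of weight `β` iff it satisfies one linear
equation per entry below the top row (giving back the second family) and one per row below the
top row (its weight; for the top row the weight condition is `Σ λ = Σ β`). Both sides of these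
`(k-1)(k+2)/2` equations are linear, in the gaps and in `(λ, β)` respectively. Finiteness holds
because all entries of a pattern lie in `[-Σ |λ_j|, Σ |λ_j|]`.
-/

open Finset
open scoped Matrix

/-- `(vectorPartitions E v).ncard` is the vector partition function of `E` at `v`. -/
def vectorPartitions {m n : Type*} [Fintype n] (E : Matrix m n ℤ) (v : m → ℤ) : Set (n → ℕ) :=
  {s | E *ᵥ (fun j => (s j : ℤ)) = v}

lemma vectorPartitions_submatrix {m n m' n' : Type*} [Fintype n] [Fintype n'] (E : Matrix m n ℤ)
    (v : m → ℤ) (eR : m' ≃ m) (eU : n' ≃ n) :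
    vectorPartitions (E.submatrix eR eU) (v ∘ eR) =
      eU.arrowCongr (Equiv.refl ℕ) ⁻¹' vectorPartitions E v := by
  ext s
  simp only [vectorPartitions, Set.mem_ofPred_eq, Set.mem_preimage, Matrix.submatrix_mulVec_equiv,
    eR.surjective.injective_comp_right.eq_iff]
  rfl

namespace GelfandTsetlin

section coord

variable {R : Type*} [Semiring R] {n : ℕ}

def coord (m : ℕ) : (Fin n → R) →ₗ[R] R :=
  if h : m < n then LinearMap.proj ⟨m, h⟩ else 0

lemma coord_apply {m : ℕ} (h : m < n) (v : Fin n → R) : coord m v = v ⟨m, h⟩ := by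
  simp [coord, h]

lemma sum_range_coord (v : Fin n → R) : ∑ j ∈ range n, coord j v = ∑ i, v i := by
  rw [← Fin.sum_univ_eq_sum_range]
  exact sum_congr rfl fun j _ => coord_apply j.2 v

lemma sum_ite_le_eq_sum_range {m : ℕ} (hm : m < n) (v : Fin n → R) :
    (∑ j : Fin n, if j.1 ≤ m then v j else 0) = ∑ j ∈ range (m + 1), coord j v := by
  have : ∀ j : Fin n, (if j.1 ≤ m then v j else 0) = if j.1 ≤ m then coord j.1 v else 0 :=
    fun j => by rw [coord_apply j.isLt]
  rw [Fintype.sum_congr _ _ this,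
    Fin.sum_univ_eq_sum_range (fun j => if j ≤ m then coord j v else 0), ← sum_filter]
  congr 1
  ext j
  simp only [mem_filter, mem_range]
  omega

end coord

variable (k : ℕ)

/-- Positions `⟨i, j⟩` of the entries below the top row. -/
def tri : Finset (Σ _ : ℕ, ℕ) := (range (k - 1)).sigma fun i => range (i + 1)

variable {k} in
lemma mem_tri {i j : ℕ} : ⟨i, j⟩ ∈ tri k ↔ i < k - 1 ∧ j ≤ i := by
  simp [tri]

lemma card_tri_mul_two : #(tri k) * 2 = (k - 1) * k := by
  rcases k with _ | n
  · simp [tri]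
  · have h := sum_range_id_mul_two (n + 1)
    rw [sum_range_succ'] at h
    simpa [tri, mul_comm] using h

/-- `Sum.inl ⟨i, j⟩` stands for the gap `x_{i+1,j} - x_{i,j}`,
`Sum.inr ⟨i, j⟩` for the gap `x_{i,j} - x_{i+1,j+1}`. -/
abbrev Slack := tri k ⊕ tri k

/-- One equation for each entry and one for each row below the top row. -/
abbrev Eqn := tri k ⊕ Fin (k - 1)

lemma card_eqn : Fintype.card (Eqn k) = (k - 1) * (k + 2) / 2 := by
  have hT := card_tri_mul_two k
  have h : (k - 1) * (k + 2) = (k - 1) * k + 2 * (k - 1) := by ring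
  simp only [Fintype.card_sum, Fintype.card_coe, Fintype.card_fin]
  omega

lemma card_slack : Fintype.card (Slack k) = (k - 1) * (k - 2) / 2 + (k - 1) * (k + 2) / 2 := by
  have h₂ : (k - 1) * (k - 2) + 2 * (k - 1) = (k - 1) * k := by
    rcases k with _ | _ | n
    · rfl
    · rfl
    · rw [show n + 2 - 2 = n by omega, show n + 2 - 1 = n + 1 by omega]
      ring
  have hT := card_tri_mul_two k
  have h₁ : (k - 1) * (k + 2) = (k - 1) * k + 2 * (k - 1) := by ring
  simp only [Fintype.card_sum, Fintype.card_coe]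
  omega

def leftGap (i j : ℕ) : (Slack k → ℤ) →ₗ[ℤ] ℤ :=
  if h : ⟨i, j⟩ ∈ tri k then LinearMap.proj (Sum.inl ⟨_, h⟩) else 0

def colDrop (i j : ℕ) : (Slack k → ℤ) →ₗ[ℤ] ℤ := ∑ p ∈ Ico i (k - 1), leftGap k p j

def slackMap : (Slack k → ℤ) →ₗ[ℤ] Eqn k → ℤ :=
  LinearMap.pi <| Sum.elim
    (fun t => LinearMap.proj (Sum.inr t) + colDrop k t.1.1 t.1.2 -
      colDrop k (t.1.1 + 1) (t.1.2 + 1))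
    (fun m => ∑ j ∈ range (m + 1), colDrop k m j)

def dataMap : (Fin (2 * k) → ℤ) →ₗ[ℤ] Eqn k → ℤ :=
  LinearMap.pi <| Sum.elim (fun t => coord t.1.2 - coord (t.1.2 + 1))
    (fun m => ∑ j ∈ range (m + 1), (coord j - coord (k + j)))

def toSlack (x : ℕ → ℕ → ℤ) : Slack k → ℤ :=
  Sum.elim (fun t => x (t.1.1 + 1) t.1.2 - x t.1.1 t.1.2)
    (fun t => x t.1.1 t.1.2 - x (t.1.1 + 1) (t.1.2 + 1))

def toPattern (lam : Fin k → ℤ) (s : Slack k → ℤ) (i j : ℕ) : ℤ :=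
  if i < k ∧ j ≤ i then coord j lam - colDrop k i j s else 0

variable {k}

lemma leftGap_apply {i j : ℕ} (h : ⟨i, j⟩ ∈ tri k) (s : Slack k → ℤ) :
    leftGap k i j s = s (Sum.inl ⟨_, h⟩) := by
  simp [leftGap, h]

lemma colDrop_of_le {i : ℕ} (j : ℕ) (hi : k - 1 ≤ i) : colDrop k i j = 0 := by
  simp [colDrop, Ico_eq_empty_of_le hi]

lemma colDrop_sub_colDrop_succ {i : ℕ} (j : ℕ) (hi : i < k - 1) (s : Slack k → ℤ) :
    colDrop k i j s - colDrop k (i + 1) j s = leftGap k i j s := by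
  simp [colDrop, sum_eq_sum_Ico_succ_bot hi]

lemma colDrop_toSlack {i j : ℕ} (hji : j ≤ i) (hi : i ≤ k - 1) (x : ℕ → ℕ → ℤ) :
    colDrop k i j (toSlack k x) = x (k - 1) j - x i j := by
  rw [← sum_Ico_sub (fun p => x p j) hi, colDrop, LinearMap.sum_apply]
  refine sum_congr rfl fun p hp => ?_
  rw [mem_Ico] at hp
  rw [leftGap_apply (mem_tri.2 ⟨hp.2, hji.trans hp.1⟩)]
  rfl

lemma slackMap_inl (s : Slack k → ℤ) (t : tri k) :
    slackMap k s (Sum.inl t) =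
      s (Sum.inr t) + colDrop k t.1.1 t.1.2 s - colDrop k (t.1.1 + 1) (t.1.2 + 1) s := by
  simp [slackMap]

lemma slackMap_inr (s : Slack k → ℤ) (m : Fin (k - 1)) :
    slackMap k s (Sum.inr m) = ∑ j ∈ range (m + 1), colDrop k m j s := by
  simp [slackMap]

def concat (lam beta : Fin k → ℤ) : Fin (2 * k) → ℤ := fun i =>
  if h : i.1 < k then lam ⟨i.1, h⟩ else beta ⟨i.1 - k, by omega⟩

lemma coord_concat_left {j : ℕ} (hj : j < k) (lam beta : Fin k → ℤ) :
    coord j (concat lam beta) = coord j lam := by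
  rw [coord_apply (by omega), coord_apply hj, concat, dif_pos hj]

lemma coord_concat_right {j : ℕ} (hj : j < k) (lam beta : Fin k → ℤ) :
    coord (k + j) (concat lam beta) = coord j beta := by
  rw [coord_apply (by omega), coord_apply hj, concat, dif_neg (by simp)]
  simp

lemma dataMap_inl (lam beta : Fin k → ℤ) (t : tri k) :
    dataMap k (concat lam beta) (Sum.inl t) = coord t.1.2 lam - coord (t.1.2 + 1) lam := by
  obtain ⟨⟨i, j⟩, ht⟩ := t
  rw [mem_tri] at ht
  simp [dataMap, coord_concat_left (show j < k by omega),
    coord_concat_left (show j + 1 < k by omega)]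

lemma dataMap_inr (lam beta : Fin k → ℤ) (m : Fin (k - 1)) :
    dataMap k (concat lam beta) (Sum.inr m) =
      ∑ j ∈ range (m + 1), (coord j lam - coord j beta) := by
  simp only [dataMap, LinearMap.pi_apply, Sum.elim_inr, LinearMap.sum_apply,
    LinearMap.sub_apply]
  refine sum_congr rfl fun j hj => ?_
  have : j < k := by have := m.2; rw [mem_range] at hj; omega
  rw [coord_concat_left this, coord_concat_right this]

lemma interlacing_iff_toSlack_nonneg (x : ℕ → ℕ → ℤ) :
    (∀ i j : ℕ, i + 1 < k → j ≤ i → x i j ≤ x (i + 1) j ∧ x (i + 1) (j + 1) ≤ x i j) ↔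
      0 ≤ toSlack k x := by
  constructor
  · rintro h (⟨⟨i, j⟩, ht⟩ | ⟨⟨i, j⟩, ht⟩) <;> rw [mem_tri] at ht
    · simpa [toSlack] using (h i j (by omega) ht.2).1
    · simpa [toSlack] using (h i j (by omega) ht.2).2
  · intro h i j hi hj
    have h₁ := h (Sum.inl ⟨⟨i, j⟩, mem_tri.2 ⟨by omega, hj⟩⟩)
    have h₂ := h (Sum.inr ⟨⟨i, j⟩, mem_tri.2 ⟨by omega, hj⟩⟩)
    simp only [toSlack, Pi.zero_apply, Sum.elim_inl, Sum.elim_inr, sub_nonneg] at h₁ h₂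
    exact ⟨h₁, h₂⟩

lemma isGTPattern_iff (lam : Fin k → ℤ) (x : ℕ → ℕ → ℤ) :
    IsGTPattern k lam x ↔ (∀ j : Fin k, x (k - 1) j = lam j) ∧ 0 ≤ toSlack k x ∧
      ∀ i j : ℕ, k ≤ i ∨ i < j → x i j = 0 := by
  rw [IsGTPattern, interlacing_iff_toSlack_nonneg]

lemma gtHasWeight_iff (beta : Fin k → ℤ) (x : ℕ → ℕ → ℤ) :
    GTHasWeight k beta x ↔
      ∀ m : Fin k, ∑ j ∈ range (m + 1), x m j = ∑ j ∈ range (m + 1), coord j beta := by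
  simp only [GTHasWeight, sum_ite_le_eq_sum_range (Fin.is_lt _)]

section toPattern

variable (lam : Fin k → ℤ) (s : Slack k → ℤ)

lemma toPattern_of_le {i j : ℕ} (hi : i < k) (hj : j ≤ i) :
    toPattern k lam s i j = coord j lam - colDrop k i j s := by
  rw [toPattern, if_pos ⟨hi, hj⟩]

lemma toPattern_top {j : ℕ} (hj : j < k) : toPattern k lam s (k - 1) j = coord j lam := by
  rw [toPattern_of_le lam s (by omega) (by omega), colDrop_of_le j le_rfl]
  simp

lemma toSlack_toPattern_inl (t : tri k) :
    toSlack k (toPattern k lam s) (Sum.inl t) = s (Sum.inl t) := by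
  obtain ⟨⟨i, j⟩, ht⟩ := t
  have ht' := mem_tri.1 ht
  simp only [toSlack, Sum.elim_inl]
  rw [toPattern_of_le lam s (by omega) (by omega), toPattern_of_le lam s (by omega) ht'.2,
    ← leftGap_apply ht s, ← colDrop_sub_colDrop_succ j ht'.1]
  ring

lemma toSlack_toPattern_inr (t : tri k) :
    toSlack k (toPattern k lam s) (Sum.inr t) =
      coord t.1.2 lam - coord (t.1.2 + 1) lam - colDrop k t.1.1 t.1.2 s +
        colDrop k (t.1.1 + 1) (t.1.2 + 1) s := by
  obtain ⟨⟨i, j⟩, ht⟩ := t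
  rw [mem_tri] at ht
  simp only [toSlack, Sum.elim_inr]
  rw [toPattern_of_le lam s (by omega) ht.2, toPattern_of_le lam s (by omega) (by omega)]
  ring

lemma sum_toPattern_top (hk : 0 < k) :
    ∑ j ∈ range (k - 1 + 1), toPattern k lam s (k - 1) j = ∑ i, lam i := by
  rw [Nat.sub_add_cancel hk, ← sum_range_coord]
  exact sum_congr rfl fun j hj => toPattern_top lam s (mem_range.1 hj)

lemma toPattern_of_not_le {i j : ℕ} (h : k ≤ i ∨ i < j) : toPattern k lam s i j = 0 := by
  rw [toPattern, if_neg (by omega)]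

lemma toPattern_toSlack {x : ℕ → ℕ → ℤ} (hx : IsGTPattern k lam x) :
    toPattern k lam (toSlack k x) = x := by
  funext i j
  by_cases h : i < k ∧ j ≤ i
  · rw [toPattern_of_le lam _ h.1 h.2, colDrop_toSlack h.2 (by omega), hx.1 ⟨j, by omega⟩,
      coord_apply (by omega)]
    ring
  · rw [toPattern_of_not_le lam _ (by omega), hx.2.2 i j (by omega)]

lemma isGTPattern_toPattern (hs : toSlack k (toPattern k lam s) = s) (hs₀ : 0 ≤ s) :
    IsGTPattern k lam (toPattern k lam s) := by
  refine (isGTPattern_iff lam _).2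
    ⟨fun j => ?_, hs.symm ▸ hs₀, fun i j h => toPattern_of_not_le lam s h⟩
  rw [toPattern_top lam s j.2, coord_apply j.2]

lemma slackMap_eq_dataMap_iff (beta : Fin k → ℤ) :
    slackMap k s = dataMap k (concat lam beta) ↔
      toSlack k (toPattern k lam s) = s ∧
        ∀ m : Fin (k - 1),
          ∑ j ∈ range (m + 1), toPattern k lam s m j = ∑ j ∈ range (m + 1), coord j beta := by
  simp only [funext_iff, Sum.forall, slackMap_inl, slackMap_inr, dataMap_inl, dataMap_inr,
    toSlack_toPattern_inl, toSlack_toPattern_inr, implies_true, true_and]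
  refine and_congr (forall_congr' fun t => ?_) (forall_congr' fun m => ?_)
  · constructor <;> intro h <;> linarith
  · have hm := m.2
    rw [sum_congr rfl fun j hj => toPattern_of_le lam s (i := m) (by omega)
      (Nat.lt_succ_iff.1 (mem_range.1 hj)), sum_sub_distrib, sum_sub_distrib]
    constructor <;> intro h <;> linarith

lemma gtHasWeight_toPattern_iff {beta : Fin k → ℤ} (hsum : ∑ i, lam i = ∑ i, beta i) :
    GTHasWeight k beta (toPattern k lam s) ↔
      ∀ m : Fin (k - 1),
        ∑ j ∈ range (m + 1), toPattern k lam s m j = ∑ j ∈ range (m + 1), coord j beta := by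
  rw [gtHasWeight_iff]
  refine ⟨fun h m => h ⟨m, by omega⟩, fun h m => ?_⟩
  by_cases hm : m.1 < k - 1
  · exact h ⟨m, hm⟩
  · have hm' : (m : ℕ) = k - 1 := by omega
    rw [hm', sum_toPattern_top lam s (by omega), hsum, Nat.sub_add_cancel (by omega),
      sum_range_coord]

end toPattern

lemma abs_le_sum_abs_of_isGTPattern {lam : Fin k → ℤ} {x : ℕ → ℕ → ℤ}
    (hx : IsGTPattern k lam x) (i j : ℕ) :
    |x i j| ≤ ∑ j, |lam j| := by
  have hC₀ : 0 ≤ ∑ j, |lam j| := sum_nonneg fun j _ => abs_nonneg (lam j)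
  suffices ∀ d i j, k ≤ i + d → |x i j| ≤ ∑ j, |lam j| from this k i j (by omega)
  intro d
  induction d with
  | zero => intro i j hi; rw [hx.2.2 i j (.inl hi), abs_zero]; exact hC₀
  | succ d ih =>
    intro i j hi
    by_cases hz : k ≤ i ∨ i < j
    · rw [hx.2.2 i j hz, abs_zero]; exact hC₀
    by_cases htop : i + 1 = k
    · rw [show i = k - 1 by omega, hx.1 ⟨j, by omega⟩]
      exact single_le_sum (fun j _ => abs_nonneg (lam j)) (mem_univ _)
    have hint := hx.2.1 i j (by omega) (by omega)
    have h₁ := abs_le.1 (ih (i + 1) j (by omega))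
    have h₂ := abs_le.1 (ih (i + 1) (j + 1) (by omega))
    exact abs_le.2 ⟨by linarith, by linarith⟩

lemma setOf_isGTPattern_finite (lam : Fin k → ℤ) : {x | IsGTPattern k lam x}.Finite := by
  set C := ∑ j, |lam j|
  refine Set.Finite.of_finite_image (f := fun x (p : Fin k × Fin k) => x p.1 p.2)
    ((Set.Finite.pi (t := fun _ => Set.Icc (-C) C) fun _ => Set.finite_Icc _ _).subset ?_) ?_
  · rintro _ ⟨x, hx, rfl⟩ p -
    exact abs_le.1 (abs_le_sum_abs_of_isGTPattern hx p.1 p.2)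
  · intro x hx y hy hxy
    funext i j
    by_cases h : i < k ∧ j < k
    · exact congrFun hxy (⟨i, h.1⟩, ⟨j, h.2⟩)
    · rw [hx.2.2 i j (by omega), hy.2.2 i j (by omega)]

lemma bijOn_toSlack {lam beta : Fin k → ℤ} (hsum : ∑ i, lam i = ∑ i, beta i) :
    Set.BijOn (fun x u => (toSlack k x u).toNat)
      {x | IsGTPattern k lam x ∧ GTHasWeight k beta x}
      (vectorPartitions (LinearMap.toMatrix' (slackMap k))
        (LinearMap.toMatrix' (dataMap k) *ᵥ concat lam beta)) := by
  have hcast {x} (hx : IsGTPattern k lam x) :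
      (fun u => ((toSlack k x u).toNat : ℤ)) = toSlack k x :=
    funext fun u => Int.toNat_of_nonneg (((isGTPattern_iff lam x).1 hx).2.1 u)
  have hmem (t : Slack k → ℕ) : t ∈ vectorPartitions (LinearMap.toMatrix' (slackMap k))
      (LinearMap.toMatrix' (dataMap k) *ᵥ concat lam beta) ↔
        slackMap k (fun u => (t u : ℤ)) = dataMap k (concat lam beta) := by
    simp only [vectorPartitions, Set.mem_ofPred_eq, LinearMap.toMatrix'_mulVec]
  refine Set.InvOn.bijOn (f' := fun t => toPattern k lam fun u => (t u : ℤ)) ⟨?_, ?_⟩ ?_ ?_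
  · intro x hx
    simp only [hcast hx.1, toPattern_toSlack lam hx.1]
  · intro t ht
    have := ((slackMap_eq_dataMap_iff lam _ beta).1 ((hmem t).1 ht)).1
    funext u
    simp [this]
  · intro x hx
    refine (hmem _).2 ((slackMap_eq_dataMap_iff lam _ beta).2 ?_)
    rw [hcast hx.1, toPattern_toSlack lam hx.1]
    exact ⟨rfl, fun m => (gtHasWeight_iff beta x).1 hx.2 ⟨m, by omega⟩⟩
  · intro t ht
    obtain ⟨hs, hw⟩ := (slackMap_eq_dataMap_iff lam _ beta).1 ((hmem t).1 ht)
    exact ⟨isGTPattern_toPattern lam _ hs fun u => Int.natCast_nonneg _,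
      (gtHasWeight_toPattern_iff lam _ hsum).2 hw⟩

end GelfandTsetlin

open GelfandTsetlin

/-- The weight multiplicity function of `sl_k` is a single vector partition function
composed with a linear map: there are integer matrices `E` (of size `N × (K+N)`) and
`B` (of size `N × 2k`), with `K = (k-1)(k-2)/2` and `N = (k-1)(k+2)/2`, such that for
all dominant `λ` and all `β` (integral, sum zero), the set
`{s ∈ ℕ^(K+N) : E s = B (λ,β)}` is finite with cardinality `m_λ(β)`. -/
theorem multiplicity_is_single_partition_function (k : ℕ) :
    ∃ (E : Matrix (Fin ((k - 1) * (k + 2) / 2))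
          (Fin ((k - 1) * (k - 2) / 2 + (k - 1) * (k + 2) / 2)) ℤ)
      (B : Matrix (Fin ((k - 1) * (k + 2) / 2)) (Fin (2 * k)) ℤ),
      ∀ lam beta : Fin k → ℤ, Antitone lam →
        (∑ i, lam i) = 0 → (∑ i, beta i) = 0 →
        {s : Fin ((k - 1) * (k - 2) / 2 + (k - 1) * (k + 2) / 2) → ℕ |
            E.mulVec (fun j => (s j : ℤ))
              = B.mulVec (fun i : Fin (2 * k) =>
                  if h : i.1 < k then lam ⟨i.1, h⟩
                  else beta ⟨i.1 - k, by have := i.isLt; omega⟩)}.Finite ∧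
        Set.ncard {s : Fin ((k - 1) * (k - 2) / 2 + (k - 1) * (k + 2) / 2) → ℕ |
            E.mulVec (fun j => (s j : ℤ))
              = B.mulVec (fun i : Fin (2 * k) =>
                  if h : i.1 < k then lam ⟨i.1, h⟩
                  else beta ⟨i.1 - k, by have := i.isLt; omega⟩)}
          = gtMult k lam beta := by
  let eR := (Fintype.equivFinOfCardEq (card_eqn k)).symm
  let eU := (Fintype.equivFinOfCardEq (card_slack k)).symm
  refine ⟨(LinearMap.toMatrix' (slackMap k)).submatrix eR eU,
    (LinearMap.toMatrix' (dataMap k)).submatrix eR (Equiv.refl _), fun lam beta _ hlam hbeta => ?_⟩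
  have hbij := bijOn_toSlack (hlam.trans hbeta.symm)
  have hB : (LinearMap.toMatrix' (dataMap k)).submatrix eR (Equiv.refl _) *ᵥ concat lam beta =
      (LinearMap.toMatrix' (dataMap k) *ᵥ concat lam beta) ∘ eR :=
    Matrix.submatrix_mulVec_equiv _ _ _ _
  change (vectorPartitions _ (_ *ᵥ concat lam beta)).Finite ∧
    (vectorPartitions _ (_ *ᵥ concat lam beta)).ncard = _
  rw [hB, vectorPartitions_submatrix, gtMult, hbij.ncard_eq,
    Set.ncard_preimage_of_injective_subset_range (Equiv.injective _) (by simp)]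
  have hfin : {x | IsGTPattern k lam x ∧ GTHasWeight k beta x}.Finite :=
    (setOf_isGTPattern_finite lam).subset fun _ hx => hx.1
  exact ⟨(hbij.image_eq ▸ hfin.image _).preimage (Equiv.injective _).injOn, rfl⟩
end

section
/- For all λ, β ∈ ℤ³ with λ₁ ≥ λ₂ ≥ λ₃, λ₁+λ₂+λ₃ = 0 and β₁+β₂+β₃ = 0, the number of Gelfand–Tsetlin patterns with top row λ and weight β equals the number of 6-tuples (x₁,…,x₆) ∈ ℕ⁶ satisfying the five equations: x₁ + x₂ = λ₁ − λ₂; −x₂ + x₃ = 2λ₂ − β₁ − β₂; x₂ + x₄ = β₁ + β₂ + λ₁; −x₂ + x₅ = λ₂ − β₁; −x₂ + x₆ = λ₂ − β₂. (This is the explicit single-partition-function expression m_λ(β) = φ_{E₃}(B₃(λ,β)) for sl₃.) -/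
/-- aux: pattern determined by middle-row first entry `a`. -/
def GTP (lam beta : Fin 3 → ℤ) (a : ℤ) : ℕ → ℕ → ℤ := fun i j =>
  if i = 0 ∧ j = 0 then beta 0
  else if i = 1 ∧ j = 0 then a
  else if i = 1 ∧ j = 1 then beta 0 + beta 1 - a
  else if i = 2 ∧ j = 0 then lam 0
  else if i = 2 ∧ j = 1 then lam 1
  else if i = 2 ∧ j = 2 then lam 2
  else 0

def GTQ (lam beta : Fin 3 → ℤ) (a : ℤ) : Fin 6 → ℕ :=
  ![(lam 0 - a).toNat, (a - lam 1).toNat, (a - (beta 0 + beta 1 - lam 1)).toNat,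
    (beta 0 + beta 1 - lam 2 - a).toNat, (a - beta 0).toNat, (a - beta 1).toNat]

lemma GTQ0 (lam beta : Fin 3 → ℤ) (a : ℤ) : GTQ lam beta a 0 = (lam 0 - a).toNat := rfl
lemma GTQ1 (lam beta : Fin 3 → ℤ) (a : ℤ) : GTQ lam beta a 1 = (a - lam 1).toNat := rfl
lemma GTQ2 (lam beta : Fin 3 → ℤ) (a : ℤ) : GTQ lam beta a 2 = (a - (beta 0 + beta 1 - lam 1)).toNat := rfl
lemma GTQ3 (lam beta : Fin 3 → ℤ) (a : ℤ) : GTQ lam beta a 3 = (beta 0 + beta 1 - lam 2 - a).toNat := rfl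
lemma GTQ4 (lam beta : Fin 3 → ℤ) (a : ℤ) : GTQ lam beta a 4 = (a - beta 0).toNat := rfl
lemma GTQ5 (lam beta : Fin 3 → ℤ) (a : ℤ) : GTQ lam beta a 5 = (a - beta 1).toNat := rfl

lemma fin6_ext {f g : Fin 6 → ℕ} (h0 : f 0 = g 0) (h1 : f 1 = g 1) (h2 : f 2 = g 2)
    (h3 : f 3 = g 3) (h4 : f 4 = g 4) (h5 : f 5 = g 5) : f = g := by
  funext i; fin_cases i <;> assumption

def GTS (lam beta : Fin 3 → ℤ) : Set ℤ :=
  {a | lam 1 ≤ a ∧ a ≤ lam 0 ∧ beta 0 + beta 1 - lam 1 ≤ a ∧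
       a ≤ beta 0 + beta 1 - lam 2 ∧ beta 0 ≤ a ∧ beta 1 ≤ a}


lemma GTset1_eq (lam beta : Fin 3 → ℤ)
    (h01 : lam 1 ≤ lam 0) (h12 : lam 2 ≤ lam 1)
    (hl : lam 0 + lam 1 + lam 2 = 0) (hb : beta 0 + beta 1 + beta 2 = 0) :
    {x : ℕ → ℕ → ℤ | IsGTPattern 3 lam x ∧ GTHasWeight 3 beta x}
      = GTP lam beta '' GTS lam beta := by
  ext x
  constructor
  · rintro ⟨⟨h1, h2, h3⟩, hw⟩
    have e20 : x 2 0 = lam 0 := h1 0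
    have e21 : x 2 1 = lam 1 := h1 1
    have e22 : x 2 2 = lam 2 := h1 2
    have w0 := hw 0
    have w1 := hw 1
    simp [Fin.sum_univ_three, Finset.sum_range_succ] at w0 w1
    -- w0 : x 0 0 = beta 0, w1 : x 1 0 + x 1 1 = beta 0 + beta 1
    have i10 := h2 1 0 (by norm_num) (by norm_num)
    have i11 := h2 1 1 (by norm_num) (by norm_num)
    have i00 := h2 0 0 (by norm_num) (by norm_num)
    rw [e20, e21] at i10
    rw [e21, e22] at i11
    refine ⟨x 1 0, ⟨?_, ?_, ?_, ?_, ?_, ?_⟩, ?_⟩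
    · exact i10.2
    · exact i10.1
    · linarith [i11.1]
    · linarith [i11.2]
    · linarith [i00.1]
    · linarith [i00.2]
    · funext i j
      rcases le_or_gt 3 i with hi | hi
      · rw [h3 i j (Or.inl hi)]
        simp only [GTP]
        split_ifs <;> omega
      rcases lt_or_ge i j with hij | hij
      · rw [h3 i j (Or.inr hij)]
        simp only [GTP]
        split_ifs <;> omega
      interval_cases i <;> interval_cases j <;>
        simp only [GTP] <;> norm_num <;> omega
  · rintro ⟨a, ⟨ha1, ha2, ha3, ha4, ha5, ha6⟩, rfl⟩
    refine ⟨⟨?_, ?_, ?_⟩, ?_⟩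
    · intro j
      fin_cases j <;> simp [GTP]
    · intro i j hi hj
      have hi' : i ≤ 1 := by omega
      interval_cases i <;> interval_cases j <;>
        simp only [GTP] <;> norm_num <;> constructor <;> linarith
    · intro i j hij
      simp only [GTP]
      split_ifs <;> omega
    · intro m
      fin_cases m <;>
        simp [GTP, Fin.sum_univ_three, Finset.sum_range_succ] <;> linarith


lemma GTset2_eq (lam beta : Fin 3 → ℤ)
    (h01 : lam 1 ≤ lam 0) (h12 : lam 2 ≤ lam 1)
    (hl : lam 0 + lam 1 + lam 2 = 0) (hb : beta 0 + beta 1 + beta 2 = 0) :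
    {x : Fin 6 → ℕ |
        (x 0 : ℤ) + (x 1 : ℤ) = lam 0 - lam 1 ∧
        -(x 1 : ℤ) + (x 2 : ℤ) = 2 * lam 1 - beta 0 - beta 1 ∧
        (x 1 : ℤ) + (x 3 : ℤ) = beta 0 + beta 1 + lam 0 ∧
        -(x 1 : ℤ) + (x 4 : ℤ) = lam 1 - beta 0 ∧
        -(x 1 : ℤ) + (x 5 : ℤ) = lam 1 - beta 1}
      = GTQ lam beta '' GTS lam beta := by
  ext v
  constructor
  · rintro ⟨e1, e2, e3, e4, e5⟩
    refine ⟨lam 1 + (v 1 : ℤ), ⟨?_, ?_, ?_, ?_, ?_, ?_⟩, ?_⟩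
    · omega
    · omega
    · omega
    · omega
    · omega
    · omega
    · refine fin6_ext ?_ ?_ ?_ ?_ ?_ ?_ <;>
        simp only [GTQ0, GTQ1, GTQ2, GTQ3, GTQ4, GTQ5] <;> omega
  · rintro ⟨a, ⟨ha1, ha2, ha3, ha4, ha5, ha6⟩, rfl⟩
    simp only [Set.mem_setOf_eq, GTQ0, GTQ1, GTQ2, GTQ3, GTQ4, GTQ5]
    refine ⟨by omega, by omega, by omega, by omega, by omega⟩

/-- The explicit single-partition-function expression `m_λ(β) = φ_{E₃}(B₃(λ,β))`
for `sl₃`: the weight multiplicity equals the number of 6-tuples of natural numbers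
satisfying the five listed linear equations. -/
theorem sl3_multiplicity_eq_partition_function (lam beta : Fin 3 → ℤ)
    (h01 : lam 1 ≤ lam 0) (h12 : lam 2 ≤ lam 1)
    (hl : lam 0 + lam 1 + lam 2 = 0) (hb : beta 0 + beta 1 + beta 2 = 0) :
    gtMult 3 lam beta =
      Set.ncard {x : Fin 6 → ℕ |
        (x 0 : ℤ) + (x 1 : ℤ) = lam 0 - lam 1 ∧
        -(x 1 : ℤ) + (x 2 : ℤ) = 2 * lam 1 - beta 0 - beta 1 ∧
        (x 1 : ℤ) + (x 3 : ℤ) = beta 0 + beta 1 + lam 0 ∧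
        -(x 1 : ℤ) + (x 4 : ℤ) = lam 1 - beta 0 ∧
        -(x 1 : ℤ) + (x 5 : ℤ) = lam 1 - beta 1} := by
  have hinjP : Set.InjOn (GTP lam beta) (GTS lam beta) := by
    intro a _ b _ h
    have := congrFun (congrFun h 1) 0
    simpa [GTP] using this
  have hinjQ : Set.InjOn (GTQ lam beta) (GTS lam beta) := by
    intro a ha b hb h
    have := congrFun h 1
    rw [GTQ1, GTQ1] at this
    have ha1 := ha.1
    have hb1 := hb.1
    omega
  rw [gtMult, GTset1_eq lam beta h01 h12 hl hb, GTset2_eq lam beta h01 h12 hl hb,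
    Set.ncard_image_of_injOn hinjP, Set.ncard_image_of_injOn hinjQ]
end

section
/- For all λ, β ∈ ℤ⁴ with λ₁ ≥ λ₂ ≥ λ₃ ≥ λ₄, λ₁+λ₂+λ₃+λ₄ = 0 and β₁+β₂+β₃+β₄ = 0, the number of Gelfand–Tsetlin patterns with top row λ and weight β equals the number of 12-tuples (x₁,…,x₁₂) ∈ ℕ¹² satisfying the nine equations: x₂ + x₃ + x₄ = λ₁ + β₁ + β₂ + β₃; x₁ − x₂ + x₃ + x₅ = λ₂ − λ₃; x₂ + x₆ = λ₁ − λ₂; x₃ + x₇ = λ₂ − λ₃; −x₂ − x₃ + x₈ = λ₂ + 2λ₃ − β₁ − β₂ − β₃; −x₁ − 2x₃ + x₉ = 2λ₃ − β₁ − β₂; −x₁ − x₃ + x₁₀ = λ₃ − β₁; −x₁ − x₃ + x₁₁ = λ₃ − β₂; x₁ − x₂ + x₁₂ = λ₂ − β₃. (This is the explicit single-partition-function expression m_λ(β) = φ_{E₄}(B₄(λ,β)) for sl₄.) -/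
/-! With the top row `lam` fixed and the weight `beta` fixing every row sum, a four-row
Gelfand–Tsetlin pattern is determined by the three entries `x 2 0`, `x 2 1`, `x 1 0`.
Sending a pattern to the twelve gaps of its interlacing inequalities lands in the solution set
of the nine equations, which are exactly the linear relations among these gaps; conversely
`x 2 0 = lam 1 + y 1`, `x 2 1 = lam 2 + y 2`, `x 1 0 = x 2 1 + y 0` rebuild the pattern from a
solution `y`, and the remaining equations say that every gap of the rebuilt pattern is the
corresponding `y i ≥ 0`. -/

namespace IsGTPattern

variable {k : ℕ} {lam lam' : Fin k → ℤ} {x z : ℕ → ℕ → ℤ}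

lemma ext_of_triangle (hx : IsGTPattern k lam x) (hz : IsGTPattern k lam' z)
    (h : ∀ i j, i < k → j ≤ i → x i j = z i j) : x = z := by
  funext i j
  by_cases hout : k ≤ i ∨ i < j
  · rw [hx.2.2 i j hout, hz.2.2 i j hout]
  · simp only [not_or, not_le, not_lt] at hout
    exact h i j hout.1 hout.2

end IsGTPattern

lemma isGTPattern_four_iff {lam : Fin 4 → ℤ} {x : ℕ → ℕ → ℤ} :
    IsGTPattern 4 lam x ↔
      (x 3 0 = lam 0 ∧ x 3 1 = lam 1 ∧ x 3 2 = lam 2 ∧ x 3 3 = lam 3) ∧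
      (x 2 0 ≤ x 3 0 ∧ x 3 1 ≤ x 2 0 ∧ x 2 1 ≤ x 3 1 ∧ x 3 2 ≤ x 2 1 ∧
        x 2 2 ≤ x 3 2 ∧ x 3 3 ≤ x 2 2 ∧
        x 1 0 ≤ x 2 0 ∧ x 2 1 ≤ x 1 0 ∧ x 1 1 ≤ x 2 1 ∧ x 2 2 ≤ x 1 1 ∧
        x 0 0 ≤ x 1 0 ∧ x 1 1 ≤ x 0 0) ∧
      (∀ i j : ℕ, 4 ≤ i ∨ i < j → x i j = 0) := by
  refine and_congr ?_ (and_congr_left fun _ => ?_)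
  · simp [Fin.forall_fin_succ]
  · constructor
    · intro h
      have := h 0 0; have := h 1 0; have := h 1 1; have := h 2 0; have := h 2 1; have := h 2 2
      simp_all
    · intro h i j hi hj
      obtain hi : i < 3 := by omega
      interval_cases i <;> interval_cases j <;> simp_all

lemma gtHasWeight_four_iff {beta : Fin 4 → ℤ} {x : ℕ → ℕ → ℤ} :
    GTHasWeight 4 beta x ↔
      x 0 0 = beta 0 ∧ x 1 0 + x 1 1 = beta 0 + beta 1 ∧
      x 2 0 + x 2 1 + x 2 2 = beta 0 + beta 1 + beta 2 ∧
      x 3 0 + x 3 1 + x 3 2 + x 3 3 = beta 0 + beta 1 + beta 2 + beta 3 := by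
  simp [GTHasWeight, Fin.forall_fin_succ, Fin.sum_univ_four, Finset.sum_range_succ, add_assoc]

def sl4PartitionSet (lam beta : Fin 4 → ℤ) : Set (Fin 12 → ℕ) :=
  {x : Fin 12 → ℕ |
    (x 1 : ℤ) + (x 2 : ℤ) + (x 3 : ℤ) = lam 0 + beta 0 + beta 1 + beta 2 ∧
    (x 0 : ℤ) - (x 1 : ℤ) + (x 2 : ℤ) + (x 4 : ℤ) = lam 1 - lam 2 ∧
    (x 1 : ℤ) + (x 5 : ℤ) = lam 0 - lam 1 ∧
    (x 2 : ℤ) + (x 6 : ℤ) = lam 1 - lam 2 ∧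
    -(x 1 : ℤ) - (x 2 : ℤ) + (x 7 : ℤ)
      = lam 1 + 2 * lam 2 - beta 0 - beta 1 - beta 2 ∧
    -(x 0 : ℤ) - 2 * (x 2 : ℤ) + (x 8 : ℤ) = 2 * lam 2 - beta 0 - beta 1 ∧
    -(x 0 : ℤ) - (x 2 : ℤ) + (x 9 : ℤ) = lam 2 - beta 0 ∧
    -(x 0 : ℤ) - (x 2 : ℤ) + (x 10 : ℤ) = lam 2 - beta 1 ∧
    (x 0 : ℤ) - (x 1 : ℤ) + (x 11 : ℤ) = lam 1 - beta 2}

def gtGaps (x : ℕ → ℕ → ℤ) : Fin 12 → ℕ :=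
  ![(x 1 0 - x 2 1).toNat, (x 2 0 - x 3 1).toNat, (x 2 1 - x 3 2).toNat,
    (x 2 2 - x 3 3).toNat, (x 2 0 - x 1 0).toNat, (x 3 0 - x 2 0).toNat,
    (x 3 1 - x 2 1).toNat, (x 3 2 - x 2 2).toNat, (x 2 1 - x 1 1).toNat,
    (x 1 0 - x 0 0).toNat, (x 0 0 - x 1 1).toNat, (x 1 1 - x 2 2).toNat]

def gtOfGaps (lam beta : Fin 4 → ℤ) (y : Fin 12 → ℕ) : ℕ → ℕ → ℤ
  | 0, 0 => beta 0
  | 1, 0 => lam 2 + y 0 + y 2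
  | 1, 1 => beta 0 + beta 1 - (lam 2 + y 0 + y 2)
  | 2, 0 => lam 1 + y 1
  | 2, 1 => lam 2 + y 2
  | 2, 2 => beta 0 + beta 1 + beta 2 - (lam 1 + y 1) - (lam 2 + y 2)
  | 3, 0 => lam 0
  | 3, 1 => lam 1
  | 3, 2 => lam 2
  | 3, 3 => lam 3
  | _, _ => 0

section

variable {lam beta : Fin 4 → ℤ}

lemma gtOfGaps_eq_zero (y : Fin 12 → ℕ) {i j : ℕ} (h : 4 ≤ i ∨ i < j) :
    gtOfGaps lam beta y i j = 0 := by
  rcases i with _ | _ | _ | _ | i <;> rcases j with _ | _ | _ | _ | j <;>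
    first | rfl | omega

lemma mapsTo_gtGaps (hl : lam 0 + lam 1 + lam 2 + lam 3 = 0) :
    Set.MapsTo gtGaps {x | IsGTPattern 4 lam x ∧ GTHasWeight 4 beta x}
      (sl4PartitionSet lam beta) := by
  rintro x ⟨hx, hw⟩
  obtain ⟨⟨t0, t1, t2, t3⟩, ⟨i1, i2, i3, i4, i5, i6, i7, i8, i9, i10, i11, i12⟩, -⟩ :=
    isGTPattern_four_iff.mp hx
  obtain ⟨w0, w1, w2, -⟩ := gtHasWeight_four_iff.mp hw
  simp only [sl4PartitionSet, gtGaps, Set.mem_ofPred_eq, Matrix.cons_val_zero,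
    Matrix.cons_val_one, Matrix.cons_val, Int.ofNat_toNat]
  omega

lemma mapsTo_gtOfGaps (hl : lam 0 + lam 1 + lam 2 + lam 3 = 0)
    (hb : beta 0 + beta 1 + beta 2 + beta 3 = 0) :
    Set.MapsTo (gtOfGaps lam beta) (sl4PartitionSet lam beta)
      {x | IsGTPattern 4 lam x ∧ GTHasWeight 4 beta x} := by
  rintro y ⟨e1, e2, e3, e4, e5, e6, e7, e8, e9⟩
  refine ⟨isGTPattern_four_iff.mpr ⟨?_, ?_, fun i j => gtOfGaps_eq_zero y⟩,
    gtHasWeight_four_iff.mpr ?_⟩ <;>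
    simp only [gtOfGaps] <;> and_intros <;> first | trivial | omega

lemma invOn_gtOfGaps_gtGaps (hl : lam 0 + lam 1 + lam 2 + lam 3 = 0)
    (hb : beta 0 + beta 1 + beta 2 + beta 3 = 0) :
    Set.InvOn (gtOfGaps lam beta) gtGaps
      {x | IsGTPattern 4 lam x ∧ GTHasWeight 4 beta x} (sl4PartitionSet lam beta) := by
  constructor
  · intro x hx
    have hx' := mapsTo_gtOfGaps hl hb (mapsTo_gtGaps hl hx)
    obtain ⟨⟨t0, t1, t2, t3⟩, ⟨i1, i2, i3, i4, i5, i6, i7, i8, i9, i10, i11, i12⟩, -⟩ :=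
      isGTPattern_four_iff.mp hx.1
    obtain ⟨w0, w1, w2, -⟩ := gtHasWeight_four_iff.mp hx.2
    refine hx'.1.ext_of_triangle hx.1 fun i j hi hj => ?_
    interval_cases i <;> interval_cases j <;> simp [gtOfGaps, gtGaps] <;> omega
  · rintro y ⟨e1, e2, e3, e4, e5, e6, e7, e8, e9⟩
    funext k
    fin_cases k <;> simp [gtGaps, gtOfGaps] <;> omega

end

theorem sl4_multiplicity_eq_partition_function_general (lam beta : Fin 4 → ℤ)
    (hl : lam 0 + lam 1 + lam 2 + lam 3 = 0)
    (hb : beta 0 + beta 1 + beta 2 + beta 3 = 0) :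
    gtMult 4 lam beta =
      Set.ncard {x : Fin 12 → ℕ |
        (x 1 : ℤ) + (x 2 : ℤ) + (x 3 : ℤ) = lam 0 + beta 0 + beta 1 + beta 2 ∧
        (x 0 : ℤ) - (x 1 : ℤ) + (x 2 : ℤ) + (x 4 : ℤ) = lam 1 - lam 2 ∧
        (x 1 : ℤ) + (x 5 : ℤ) = lam 0 - lam 1 ∧
        (x 2 : ℤ) + (x 6 : ℤ) = lam 1 - lam 2 ∧
        -(x 1 : ℤ) - (x 2 : ℤ) + (x 7 : ℤ)
          = lam 1 + 2 * lam 2 - beta 0 - beta 1 - beta 2 ∧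
        -(x 0 : ℤ) - 2 * (x 2 : ℤ) + (x 8 : ℤ) = 2 * lam 2 - beta 0 - beta 1 ∧
        -(x 0 : ℤ) - (x 2 : ℤ) + (x 9 : ℤ) = lam 2 - beta 0 ∧
        -(x 0 : ℤ) - (x 2 : ℤ) + (x 10 : ℤ) = lam 2 - beta 1 ∧
        (x 0 : ℤ) - (x 1 : ℤ) + (x 11 : ℤ) = lam 1 - beta 2} :=
  ((invOn_gtOfGaps_gtGaps hl hb).bijOn (mapsTo_gtGaps hl)
    (mapsTo_gtOfGaps hl hb)).ncard_eq

/-- The explicit single-partition-function expression `m_λ(β) = φ_{E₄}(B₄(λ,β))`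
for `sl₄`: the weight multiplicity equals the number of 12-tuples of natural numbers
satisfying the nine listed linear equations. -/
theorem sl4_multiplicity_eq_partition_function (lam beta : Fin 4 → ℤ)
    (h01 : lam 1 ≤ lam 0) (h12 : lam 2 ≤ lam 1) (h23 : lam 3 ≤ lam 2)
    (hl : lam 0 + lam 1 + lam 2 + lam 3 = 0)
    (hb : beta 0 + beta 1 + beta 2 + beta 3 = 0) :
    gtMult 4 lam beta =
      Set.ncard {x : Fin 12 → ℕ |
        (x 1 : ℤ) + (x 2 : ℤ) + (x 3 : ℤ) = lam 0 + beta 0 + beta 1 + beta 2 ∧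
        (x 0 : ℤ) - (x 1 : ℤ) + (x 2 : ℤ) + (x 4 : ℤ) = lam 1 - lam 2 ∧
        (x 1 : ℤ) + (x 5 : ℤ) = lam 0 - lam 1 ∧
        (x 2 : ℤ) + (x 6 : ℤ) = lam 1 - lam 2 ∧
        -(x 1 : ℤ) - (x 2 : ℤ) + (x 7 : ℤ)
          = lam 1 + 2 * lam 2 - beta 0 - beta 1 - beta 2 ∧
        -(x 0 : ℤ) - 2 * (x 2 : ℤ) + (x 8 : ℤ) = 2 * lam 2 - beta 0 - beta 1 ∧
        -(x 0 : ℤ) - (x 2 : ℤ) + (x 9 : ℤ) = lam 2 - beta 0 ∧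
        -(x 0 : ℤ) - (x 2 : ℤ) + (x 10 : ℤ) = lam 2 - beta 1 ∧
        (x 0 : ℤ) - (x 1 : ℤ) + (x 11 : ℤ) = lam 1 - beta 2} :=
  sl4_multiplicity_eq_partition_function_general lam beta hl hb
end

section
/- Fix an integer n ≥ 1. In ℝ^{n+1} with the standard inner product, let V = {x ∈ ℝ^{n+1} : x₁+⋯+x_{n+1} = 0}, let Δ₊ = {e_i − e_j : 1 ≤ i < j ≤ n+1} be the positive roots of A_n, and for 1 ≤ j ≤ n let ω_j = e₁+⋯+e_j − (j/(n+1))(e₁+⋯+e_{n+1}) be the fundamental weights. Then a nonzero vector v ∈ V is orthogonal to some set of n−1 linearly independent elements of Δ₊ if and only if v is a nonzero scalar multiple of σ·ω_j for some permutation σ ∈ S_{n+1} (acting by permuting coordinates) and some 1 ≤ j ≤ n. (The normals to the facets of the maximal cones of the chamber complex of the Kostant partition function of A_n are exactly the conjugates of the fundamental weights.) -/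
/-!
Orthogonality to a root `e_i - e_j` means `v i = v j`. If `v` took three distinct values, the
Vandermonde map `x ↦ ∑ₗ xₗ (1, vₗ, vₗ²)` would kill every such root while having rank `3`,
leaving room for only `n - 2` independent roots. So a nonzero `v` with coordinate sum `0` takes
exactly two values, and is then a multiple of the indicator of a level set minus its mean, which
is a conjugate of a fundamental weight. Conversely, a multiple of `σ·ω_j` is orthogonal to the
`n - 1` conjugated simple roots `e_{σ k} - e_{σ (k+1)}` that do not cross from the first `j`
positions to the rest; they are independent because the partial-sum map
`x ↦ (x₀, x₀ + x₁, …)` sends the simple roots to the standard basis.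
-/

open Finset Function

section Roots

variable {α : Type*} [DecidableEq α]

def root (i j : α) : α → ℝ := fun l => (if l = i then 1 else 0) - (if l = j then 1 else 0)

theorem sum_root (s : Finset α) (i j : α) :
    ∑ l ∈ s, root i j l = (if i ∈ s then 1 else 0) - (if j ∈ s then 1 else 0) := by
  simp [root, sum_sub_distrib]

theorem sum_mul_root [Fintype α] (v : α → ℝ) (i j : α) : ∑ l, v l * root i j l = v i - v j := by
  simp [root, mul_sub, sum_sub_distrib]

theorem root_swap (i j : α) : root j i = -root i j := by
  funext l; simp [root]

theorem root_perm_eq_comp (σ : Equiv.Perm α) (i j : α) : root (σ i) (σ j) = root i j ∘ σ.symm := by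
  funext l; simp [root, Equiv.symm_apply_eq]

end Roots

theorem card_add_card_le_finrank {K M N ι κ : Type*} [Field K] [AddCommGroup M] [Module K M]
    [FiniteDimensional K M] [AddCommGroup N] [Module K N] [Fintype ι] [Fintype κ]
    (Φ : M →ₗ[K] N) {g : ι → M} (hg : LinearIndependent K g) (hgΦ : ∀ m, Φ (g m) = 0)
    {h : κ → M} (hh : LinearIndependent K (Φ ∘ h)) :
    Fintype.card ι + Fintype.card κ ≤ Module.finrank K M := by
  have hker : Fintype.card ι ≤ Module.finrank K (LinearMap.ker Φ) := by
    rw [← finrank_span_eq_card hg]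
    exact Submodule.finrank_mono (Submodule.span_le.2 (Set.range_subset_iff.2 hgΦ))
  have hrange : Fintype.card κ ≤ Module.finrank K (LinearMap.range Φ) := by
    rw [← finrank_span_eq_card hh]
    exact Submodule.finrank_mono
      (Submodule.span_le.2 (Set.range_subset_iff.2 fun k => LinearMap.mem_range_self Φ (h k)))
  have := LinearMap.finrank_range_add_finrank_ker Φ
  omega

section OrthogonalRoots

variable {α ι : Type*} [Fintype α] [DecidableEq α] [Fintype ι]
  {v : α → ℝ} {g : ι → α → ℝ}

theorem card_add_le_card_of_linearIndependent_roots (hg : LinearIndependent ℝ g)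
    (hroots : ∀ m, ∃ i j, v i = v j ∧ g m = root i j) {d : ℕ} (w : Fin d → α)
    (hw : Injective (v ∘ w)) : Fintype.card ι + d ≤ Fintype.card α := by
  let Φ := Fintype.linearCombination ℝ fun l (k : Fin d) => v l ^ (k : ℕ)
  have hΦ : Φ ∘ (fun k => Pi.single (w k) 1) = fun k => Matrix.vandermonde (v ∘ w) k := by
    funext k k'
    simp [Φ, Fintype.linearCombination_apply_single, Matrix.vandermonde_apply]
  have := card_add_card_le_finrank Φ hg ?_ (hΦ ▸ Matrix.linearIndependent_rows_of_det_ne_zero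
    (Matrix.det_vandermonde_ne_zero_iff.2 hw))
  · simpa using this
  · intro m
    obtain ⟨i, j, hij, hgm⟩ := hroots m
    rw [hgm]
    funext k
    simp [Φ, Fintype.linearCombination_apply, root, sub_mul, sum_sub_distrib, hij]

theorem eq_or_eq_or_eq_of_linearIndependent_roots (hg : LinearIndependent ℝ g)
    (hroots : ∀ m, ∃ i j, v i = v j ∧ g m = root i j)
    (hcard : Fintype.card α < Fintype.card ι + 3) (p q r : α) :
    v r = v p ∨ v r = v q ∨ v p = v q := by
  by_contra! hne
  obtain ⟨hrp, hrq, hpq⟩ := hne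
  have hw : Injective (v ∘ ![p, q, r]) := by
    intro x y
    fin_cases x <;> fin_cases y <;> simp [hpq, hpq.symm, hrp, hrp.symm, hrq, hrq.symm]
  have := card_add_le_card_of_linearIndependent_roots hg hroots _ hw
  omega

end OrthogonalRoots

theorem exists_ne_of_sum_eq_zero {α : Type*} [Fintype α] {v : α → ℝ} (hsum : ∑ i, v i = 0)
    (hv : v ≠ 0) : ∃ p q, v p ≠ v q := by
  obtain ⟨p, hp⟩ : ∃ p, v p ≠ 0 := by
    by_contra! h
    exact hv (funext h)
  by_contra! hconst
  have : (Fintype.card α : ℝ) * v p = 0 := by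
    simpa [fun i => hconst i p] using hsum
  have : Nonempty α := ⟨p⟩
  have : (Fintype.card α : ℝ) ≠ 0 := Nat.cast_ne_zero.2 Fintype.card_ne_zero
  simp_all

theorem eq_mul_indicator_sub_of_two_values {α : Type*} [Fintype α] {v : α → ℝ}
    (hsum : ∑ i, v i = 0) {a b : ℝ} (hab : ∀ i, v i = a ∨ v i = b) (i : α) :
    v i = (b - a) * ((if v i = b then 1 else 0) - #{l | v l = b} / Fintype.card α) := by
  have hsplit : ∀ l, v l = a + (b - a) * (if v l = b then 1 else 0) := by
    intro l
    rcases hab l with h | h <;> by_cases hb : v l = b <;> simp_all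
  have : Nonempty α := ⟨i⟩
  have hN : (Fintype.card α : ℝ) ≠ 0 := Nat.cast_ne_zero.2 Fintype.card_ne_zero
  have hsum' : Fintype.card α * a + (b - a) * #{l | v l = b} = 0 := by
    rw [← hsum, Fintype.sum_congr _ _ hsplit, sum_add_distrib, ← mul_sum, sum_boole]
    simp
  have hi := hsplit i
  generalize (if v i = b then (1 : ℝ) else 0) = δ at hi ⊢
  rw [hi]
  field_simp
  linear_combination hsum'

theorem exists_perm_val_lt_card_iff_mem {N : ℕ} (S : Finset (Fin N)) :
    ∃ σ : Equiv.Perm (Fin N), ∀ i, ((σ⁻¹ i : Fin N) : ℕ) < #S ↔ i ∈ S := by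
  have hcard : Fintype.card {k : Fin N // (k : ℕ) < #S} = Fintype.card {i // i ∈ S} := by
    rw [Fintype.card_subtype, Fin.card_filter_val_lt, Fintype.card_coe,
      min_eq_right (by simpa using card_le_univ S)]
  let e := Fintype.equivOfCardEq hcard
  refine ⟨e.extendSubtype, fun i => ?_⟩
  obtain ⟨k, rfl⟩ := e.extendSubtype.surjective i
  rw [Equiv.Perm.coe_inv, Equiv.symm_apply_apply]
  exact ⟨e.extendSubtype_mem k, not_imp_not.1 (e.extendSubtype_not_mem k)⟩

theorem linearIndependent_root_castSucc_succ (m : ℕ) :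
    LinearIndependent ℝ fun k : Fin (m + 1) => root k.castSucc k.succ := by
  let partialSums : (Fin (m + 2) → ℝ) →ₗ[ℝ] Fin (m + 1) → ℝ :=
    LinearMap.pi fun k => ∑ l ∈ Iic k.castSucc, LinearMap.proj l
  refine LinearIndependent.of_comp partialSums ?_
  convert Pi.linearIndependent_single_one (Fin (m + 1)) ℝ using 1
  funext k k'
  simp only [partialSums, comp_apply, LinearMap.pi_apply, LinearMap.coe_sum, LinearMap.coe_proj,
    Finset.sum_apply, eval, sum_root, mem_Iic, Fin.castSucc_le_castSucc_iff,
    Fin.succ_le_castSucc_iff, Pi.single_apply]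
  grind

theorem LinearIndependent.root_perm {α ι : Type*} [DecidableEq α] {a b : ι → α}
    (h : LinearIndependent ℝ fun k => root (a k) (b k)) (σ : Equiv.Perm α) :
    LinearIndependent ℝ fun k => root (σ (a k)) (σ (b k)) := by
  simp_rw [root_perm_eq_comp]
  exact h.map' (LinearEquiv.funCongrLeft ℝ ℝ σ.symm).toLinearMap (LinearEquiv.ker _)

theorem LinearIndependent.root_min_max {α ι : Type*} [LinearOrder α] {a b : ι → α}
    (h : LinearIndependent ℝ fun k => root (a k) (b k)) :
    LinearIndependent ℝ fun k => root (min (a k) (b k)) (max (a k) (b k)) := by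
  convert h.units_smul fun k => if a k ≤ b k then 1 else -1 using 1
  funext k
  by_cases hk : a k ≤ b k
  · simp [hk]
  · rw [min_eq_right (le_of_not_ge hk), max_eq_left (le_of_not_ge hk), root_swap]
    simp [hk]

theorem exists_linearIndependent_roots_of_perm {m : ℕ} (σ : Equiv.Perm (Fin (m + 2)))
    (s : Fin (m + 1)) (v : Fin (m + 2) → ℝ)
    (hv : ∀ t, t ≠ s → v (σ t.castSucc) = v (σ t.succ)) :
    ∃ g : Fin m → Fin (m + 2) → ℝ, LinearIndependent ℝ g ∧
      (∀ k, ∃ i j, i < j ∧ g k = root i j) ∧ ∀ k, ∑ l, v l * g k l = 0 := by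
  let a k := σ (s.succAbove k).castSucc
  let b k := σ (s.succAbove k).succ
  have hab : ∀ k, a k ≠ b k := fun k h =>
    Fin.castSucc_lt_succ.ne (σ.injective h)
  refine ⟨fun k => root (min (a k) (b k)) (max (a k) (b k)), ?_,
    fun k => ⟨_, _, min_lt_max.2 (hab k), rfl⟩, fun k => ?_⟩
  · exact (((linearIndependent_root_castSucc_succ m).comp _
      Fin.succAbove_right_injective).root_perm σ).root_min_max
  · have := hv _ (s.succAbove_ne k)
    rw [sum_mul_root, sub_eq_zero]
    rcases le_total (a k) (b k) with h | h <;> simp [h, a, b, this]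

theorem chamber_wall_normals_are_conjugate_fundamental_weights_general
    (n : ℕ) (v : Fin (n + 1) → ℝ)
    (hv0 : (∑ i, v i) = 0) (hvne : v ≠ 0) :
    (∃ g : Fin (n - 1) → (Fin (n + 1) → ℝ),
        LinearIndependent ℝ g ∧
        (∀ m : Fin (n - 1), ∃ i j : Fin (n + 1), i < j ∧
          g m = fun l => (if l = i then (1 : ℝ) else 0) - (if l = j then 1 else 0)) ∧
        (∀ m : Fin (n - 1), (∑ l, v l * g m l) = 0))
      ↔ (∃ (c : ℝ) (σ : Equiv.Perm (Fin (n + 1))) (j : ℕ), c ≠ 0 ∧ 1 ≤ j ∧ j ≤ n ∧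
          v = fun i =>
            c * ((if ((σ⁻¹ i : Fin (n + 1)) : ℕ) < j then (1 : ℝ) else 0)
                  - (j : ℝ) / (n + 1))) := by
  constructor
  · rintro ⟨g, hg, hpos, horth⟩
    have hroots : ∀ m, ∃ i j, v i = v j ∧ g m = root i j := fun m => by
      obtain ⟨i, j, -, hgm⟩ := hpos m
      change g m = root i j at hgm
      exact ⟨i, j, sub_eq_zero.1 (sum_mul_root v i j ▸ hgm ▸ horth m), hgm⟩
    obtain ⟨p, q, hpq⟩ := exists_ne_of_sum_eq_zero hv0 hvne
    have htwo : ∀ r, v r = v p ∨ v r = v q := fun r =>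
      (eq_or_eq_or_eq_of_linearIndependent_roots hg hroots (by simp only [Fintype.card_fin]; omega) p q r).imp_right
        (·.resolve_right hpq)
    obtain ⟨σ, hσ⟩ := exists_perm_val_lt_card_iff_mem {i | v i = v q}
    refine ⟨v q - v p, σ, #{i | v i = v q}, sub_ne_zero.2 hpq.symm, card_pos.2 ⟨q, by simp⟩, ?_,
      funext fun i => ?_⟩
    · simpa [Nat.lt_succ_iff] using card_lt_univ_of_notMem (s := {i | v i = v q}) (x := p)
        (by simpa using hpq)
    · refine (eq_mul_indicator_sub_of_two_values hv0 htwo i).trans ?_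
      simp only [hσ, mem_filter, mem_univ, true_and, Fintype.card_fin, Nat.cast_add, Nat.cast_one]
  · rintro ⟨c, σ, j, -, hj1, hjn, rfl⟩
    obtain ⟨m, rfl⟩ : ∃ m, n = m + 1 := ⟨n - 1, by omega⟩
    refine exists_linearIndependent_roots_of_perm σ ⟨j - 1, by omega⟩ _ fun t ht => ?_
    have : (t : ℕ) ≠ j - 1 := fun h => ht (Fin.ext h)
    simp only [Equiv.Perm.coe_inv, Equiv.symm_apply_apply, Fin.val_castSucc, Fin.val_succ]
    congr 3
    exact propext (by omega)

/-- In the hyperplane `V = {x : Σ xᵢ = 0}` of `ℝ^{n+1}`, a nonzero sum-zero vector `v` is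
orthogonal to some set of `n-1` linearly independent positive roots `e_i - e_j` (`i < j`)
of `A_n` if and only if `v` is a nonzero scalar multiple of a conjugate `σ·ω_j` of a
fundamental weight `ω_j = e₁ + ⋯ + e_j - (j/(n+1))(e₁ + ⋯ + e_{n+1})`. -/
theorem chamber_wall_normals_are_conjugate_fundamental_weights
    (n : ℕ) (hn : 1 ≤ n) (v : Fin (n + 1) → ℝ)
    (hv0 : (∑ i, v i) = 0) (hvne : v ≠ 0) :
    (∃ g : Fin (n - 1) → (Fin (n + 1) → ℝ),
        LinearIndependent ℝ g ∧
        (∀ m : Fin (n - 1), ∃ i j : Fin (n + 1), i < j ∧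
          g m = fun l => (if l = i then (1 : ℝ) else 0) - (if l = j then 1 else 0)) ∧
        (∀ m : Fin (n - 1), (∑ l, v l * g m l) = 0))
      ↔ (∃ (c : ℝ) (σ : Equiv.Perm (Fin (n + 1))) (j : ℕ), c ≠ 0 ∧ 1 ≤ j ∧ j ≤ n ∧
          v = fun i =>
            c * ((if ((σ⁻¹ i : Fin (n + 1)) : ℕ) < j then (1 : ℝ) else 0)
                  - (j : ℝ) / (n + 1))) :=
  chamber_wall_normals_are_conjugate_fundamental_weights_general n v hv0 hvne
end

section
/- Fix an integer k ≥ 2 and λ ∈ ℝ^k with λ₁+⋯+λ_k = 0. Let δ = ((k−1)/2, (k−3)/2, …, −(k−1)/2) ∈ ℝ^k (so δ_i = (k+1−2i)/2), and for 1 ≤ j ≤ k−1 let ω_j ∈ ℝ^k be the vector with first j coordinates (k−j)/k and last k−j coordinates −j/k. Set H = {β ∈ ℝ^k : β₁+⋯+β_k = 0}. Then the collection of subsets of H of the form {β ∈ H : ⟨σ·(λ+δ) − (ψ·β + δ), θ·ω_j⟩ = 0}, as σ, ψ, θ range over S_k and j ranges over 1 ≤ j ≤ k−1 (⟨·,·⟩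 the standard inner product), is equal to the collection of subsets of H of the form {β ∈ H : Σ_{u∈U} β_u = Σ_{v∈V} λ_v + Σ_{v∈V} δ_v − Σ_{w∈W} δ_w}, as j ranges over 1 ≤ j ≤ ⌊k/2⌋ and U, V, W range over all j-element subsets of {1,…,k}. (The hyperplanes of the Kostant arrangements for λ are exactly those given by these subset equations.) -/
/-- Half the sum of the positive roots of `sl_k`: `δ_i = (k+1-2i)/2` (1-based), i.e.
`δ i = (k - 1 - 2i)/2` for the 0-based index `i : Fin k`. -/
noncomputable def slDelta (k : ℕ) : Fin k → ℝ := fun i => ((k : ℝ) - 1 - 2 * i.1) / 2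

/-- The fundamental weight `ω_j` of `sl_k`: first `j` coordinates `(k-j)/k`,
last `k-j` coordinates `-j/k`. -/
noncomputable def slOmega (k j : ℕ) : Fin k → ℝ :=
  fun i => if i.1 < j then ((k : ℝ) - j) / k else -(j : ℝ) / k

/-!
The entries of `σ(λ+δ) − (ψβ+δ)` sum to zero on `H` (as `Σλ = Σδ = 0`), and
`θω_j = 𝟙_W − (j/k)·𝟙` with `W = θ{1,…,j}`, so the pairing is the sum of those entries over `W`:
this is the subset equation for `U = ψ⁻¹W`, `V = σ⁻¹W`. Permutations act transitively on
`j`-subsets, so every triple `(U, V, W)` arises. Since all the sums vanish over the whole index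
set, the equation for `(U, V, W)` is the negative of the one for the complements, which moves
`j` into `1 ≤ j ≤ k/2`.
-/

open Finset Equiv

theorem Finset.exists_perm_map_eq {α : Type*} [Fintype α] [DecidableEq α] {s t : Finset α}
    (h : s.card = t.card) : ∃ π : Perm α, s.map π.toEmbedding = t := by
  obtain ⟨π, hπ⟩ := (Set.powersetCard.isPretransitive (α := α) (n := t.card)).exists_smul_eq
    ⟨s, Set.powersetCard.mem_iff.mpr h⟩ ⟨t, Set.powersetCard.mem_iff.mpr rfl⟩
  refine ⟨π, ?_⟩
  simpa [Finset.smul_finset_def, Finset.map_eq_image, Perm.smul_def] using congrArg Subtype.val hπ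

theorem Finset.sum_compl_eq_neg {α M : Type*} [Fintype α] [DecidableEq α] [AddCommGroup M]
    {f : α → M} (hf : ∑ i, f i = 0) (s : Finset α) : ∑ i ∈ sᶜ, f i = -∑ i ∈ s, f i :=
  eq_neg_of_add_eq_zero_left ((sum_compl_add_sum s f).trans hf)

theorem Finset.sum_perm_inv_of_map_eq {α M : Type*} [AddCommMonoid M] {σ : Perm α}
    {V W : Finset α} (h : V.map σ.toEmbedding = W) (g : α → M) :
    ∑ i ∈ W, g (σ⁻¹ i) = ∑ v ∈ V, g v := by
  subst h
  simp [sum_map]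

theorem slDelta_rev {k : ℕ} (i : Fin k) : slDelta k i.rev = -slDelta k i := by
  simp only [slDelta, Fin.val_rev]
  push_cast [Nat.cast_sub i.isLt]
  ring

theorem sum_slDelta (k : ℕ) : ∑ i, slDelta k i = 0 := by
  have h : ∑ i, slDelta k i = -∑ i, slDelta k i := by
    rw [← sum_neg_distrib, ← Equiv.sum_comp Fin.revPerm]
    simp only [Fin.revPerm_apply, slDelta_rev]
  linarith

theorem slOmega_apply {k : ℕ} (j : ℕ) (i : Fin k) :
    slOmega k j i = (if i.1 < j then 1 else 0) - j / k := by
  have hk : (k : ℝ) ≠ 0 := Nat.cast_ne_zero.mpr i.pos.ne'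
  unfold slOmega
  split_ifs
  · field_simp
  · ring

theorem sum_mul_slOmega_perm {k : ℕ} {f : Fin k → ℝ} (hf : ∑ i, f i = 0)
    (θ : Perm (Fin k)) (j : ℕ) :
    ∑ i, f i * slOmega k j (θ⁻¹ i)
      = ∑ i ∈ ({i | i.1 < j} : Finset (Fin k)).map θ.toEmbedding, f i := by
  rw [← Equiv.sum_comp θ, sum_map]
  simp only [Perm.coe_inv, symm_apply_apply, slOmega_apply, mul_sub, mul_ite, mul_one, mul_zero,
    sum_sub_distrib, ← sum_mul, Equiv.sum_comp θ f, hf, zero_mul, sub_zero, sum_ite,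
    sum_const_zero, add_zero, coe_toEmbedding]

section Hyperplanes

variable {k : ℕ} (lam : Fin k → ℝ)

def subsetHyperplane (U V W : Finset (Fin k)) : Set (Fin k → ℝ) :=
  {β | (∑ i, β i) = 0 ∧
    (∑ u ∈ U, β u) = (∑ v ∈ V, lam v) + (∑ v ∈ V, slDelta k v) - ∑ w ∈ W, slDelta k w}

variable {lam}

theorem subsetHyperplane_compl (hsum : ∑ i, lam i = 0) (U V W : Finset (Fin k)) :
    subsetHyperplane lam Uᶜ Vᶜ Wᶜ = subsetHyperplane lam U V W := by
  ext β
  refine and_congr_right fun hβ => ?_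
  rw [sum_compl_eq_neg hβ, sum_compl_eq_neg hsum, sum_compl_eq_neg (sum_slDelta k),
    sum_compl_eq_neg (sum_slDelta k)]
  constructor <;> intro h <;> linarith

theorem kostantLocus_eq_subsetHyperplane (hsum : ∑ i, lam i = 0) {σ ψ θ : Perm (Fin k)}
    {j : ℕ} {U V W : Finset (Fin k)} (hU : U.map ψ.toEmbedding = W)
    (hV : V.map σ.toEmbedding = W) (hW : ({i | i.1 < j} : Finset (Fin k)).map θ.toEmbedding = W) :
    {β : Fin k → ℝ | (∑ i, β i) = 0 ∧
      (∑ i, ((lam (σ⁻¹ i) + slDelta k (σ⁻¹ i)) - (β (ψ⁻¹ i) + slDelta k i))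
        * slOmega k j (θ⁻¹ i)) = 0}
      = subsetHyperplane lam U V W := by
  ext β
  refine and_congr_right fun hβ => ?_
  have hzero : ∑ i, ((lam (σ⁻¹ i) + slDelta k (σ⁻¹ i)) - (β (ψ⁻¹ i) + slDelta k i)) = 0 := by
    simp only [sum_sub_distrib, sum_add_distrib, Equiv.sum_comp, hsum, hβ, sum_slDelta, sub_self]
  rw [sum_mul_slOmega_perm hzero, hW]
  simp only [sum_sub_distrib, sum_add_distrib, sum_perm_inv_of_map_eq hU,
    sum_perm_inv_of_map_eq hV]
  constructor <;> intro h <;> linarith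

end Hyperplanes

theorem kostant_arrangement_hyperplanes_general (k : ℕ)
    (lam : Fin k → ℝ) (hsum : (∑ i, lam i) = 0) :
    {S : Set (Fin k → ℝ) |
        ∃ (σ ψ θ : Equiv.Perm (Fin k)) (j : ℕ), 1 ≤ j ∧ j ≤ k - 1 ∧
          S = {β | (∑ i, β i) = 0 ∧
            (∑ i, ((lam (σ⁻¹ i) + slDelta k (σ⁻¹ i)) - (β (ψ⁻¹ i) + slDelta k i))
                * slOmega k j (θ⁻¹ i)) = 0}}
      = {S : Set (Fin k → ℝ) |
          ∃ (j : ℕ) (U V W : Finset (Fin k)), 1 ≤ j ∧ j ≤ k / 2 ∧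
            U.card = j ∧ V.card = j ∧ W.card = j ∧
            S = {β | (∑ i, β i) = 0 ∧
              (∑ u ∈ U, β u)
                = (∑ v ∈ V, lam v) + (∑ v ∈ V, slDelta k v) - ∑ w ∈ W, slDelta k w}} := by
  ext S
  constructor
  · rintro ⟨σ, ψ, θ, j, hj1, hjk, rfl⟩
    set W := ({i | i.1 < j} : Finset (Fin k)).map θ.toEmbedding
    have hWcard : W.card = j := by
      rw [card_map, Fin.card_filter_val_lt, min_eq_right (by omega)]
    have hmap (π : Perm (Fin k)) : (W.map π⁻¹.toEmbedding).map π.toEmbedding = W := by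
      simp [map_map]
    rw [kostantLocus_eq_subsetHyperplane hsum (hmap ψ) (hmap σ) rfl]
    rcases le_or_gt j (k / 2) with hj | hj
    · exact ⟨j, _, _, W, hj1, hj, by simp [hWcard], by simp [hWcard], hWcard, rfl⟩
    · refine ⟨k - j, _, _, Wᶜ, by omega, by omega, ?_, ?_, ?_,
        (subsetHyperplane_compl hsum _ _ _).symm⟩ <;> simp [card_compl, hWcard]
  · rintro ⟨j, U, V, W, hj1, hj, hU, hV, hW, rfl⟩
    obtain ⟨θ, hθ⟩ := exists_perm_map_eq (s := ({i | i.1 < j} : Finset (Fin k))) (t := W)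
      (by rw [Fin.card_filter_val_lt, min_eq_right (by omega), hW])
    obtain ⟨σ, hσ⟩ := exists_perm_map_eq (hV.trans hW.symm)
    obtain ⟨ψ, hψ⟩ := exists_perm_map_eq (hU.trans hW.symm)
    exact ⟨σ, ψ, θ, j, hj1, by omega, (kostantLocus_eq_subsetHyperplane hsum hψ hσ hθ).symm⟩

/-- The hyperplanes of the Kostant arrangements, given as the loci
`⟨σ(λ+δ) - (ψ(β)+δ), θ(ω_j)⟩ = 0` in the hyperplane `H = {β : Σβᵢ = 0}`, are exactly the
sets `{β ∈ H : Σ_{u∈U} β_u = Σ_{v∈V} λ_v + Σ_{v∈V} δ_v - Σ_{w∈W} δ_w}` for `j`-element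
subsets `U,V,W` of `{1,…,k}` with `1 ≤ j ≤ ⌊k/2⌋`. -/
theorem kostant_arrangement_hyperplanes (k : ℕ) (hk : 2 ≤ k)
    (lam : Fin k → ℝ) (hsum : (∑ i, lam i) = 0) :
    {S : Set (Fin k → ℝ) |
        ∃ (σ ψ θ : Equiv.Perm (Fin k)) (j : ℕ), 1 ≤ j ∧ j ≤ k - 1 ∧
          S = {β | (∑ i, β i) = 0 ∧
            (∑ i, ((lam (σ⁻¹ i) + slDelta k (σ⁻¹ i)) - (β (ψ⁻¹ i) + slDelta k i))
                * slOmega k j (θ⁻¹ i)) = 0}}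
      = {S : Set (Fin k → ℝ) |
          ∃ (j : ℕ) (U V W : Finset (Fin k)), 1 ≤ j ∧ j ≤ k / 2 ∧
            U.card = j ∧ V.card = j ∧ W.card = j ∧
            S = {β | (∑ i, β i) = 0 ∧
              (∑ u ∈ U, β u)
                = (∑ v ∈ V, lam v) + (∑ v ∈ V, slDelta k v) - ∑ w ∈ W, slDelta k w}} :=
  kostant_arrangement_hyperplanes_general k lam hsum
end

section
/- Let k ≥ 2, let λ ∈ ℝ^k satisfy λ₁ > λ₂ > ⋯ > λ_k, let σ ∈ S_k and set μ = σ·λ, and let U ⊆ {1,…,k} with 1 ≤ |U| ≤ k−1. Then the affine span of the set {τ·μ : τ ∈ S_k, τ(U) = U} equals {x ∈ ℝ^k : x₁+⋯+x_k = λ₁+⋯+λ_k and Σ_{i∈U} x_i = Σ_{i∈U} μ_i}. (The supporting hyperplanes of the walls conv(W·σ(λ)) of the permutahedron, for W a parabolic subgroup permuting U and its complement independently, are given by the equations Σ_{i∈U} β_i = Σ_{i∈V} λ_i.) -/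
/-- The supporting hyperplane of a wall of the permutahedron: for `λ` with strictly
decreasing coordinates, `σ ∈ S_k`, `μ = σ·λ`, and `U ⊆ {1,…,k}` with `1 ≤ |U| ≤ k-1`, the
affine span of the orbit of `μ` under the parabolic subgroup `{τ : τ(U) = U}` is
`{x : Σᵢ xᵢ = Σᵢ λᵢ and Σ_{i∈U} xᵢ = Σ_{i∈U} μᵢ}`. -/
theorem wall_supporting_hyperplane (k : ℕ) (hk : 2 ≤ k)
    (lam : Fin k → ℝ) (hlam : StrictAnti lam)
    (σ : Equiv.Perm (Fin k)) (U : Finset (Fin k))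
    (hU1 : 1 ≤ U.card) (hU2 : U.card ≤ k - 1) :
    (affineSpan ℝ {x : Fin k → ℝ | ∃ τ : Equiv.Perm (Fin k),
        (∀ i, i ∈ U ↔ τ i ∈ U) ∧ x = fun i => lam (σ⁻¹ (τ⁻¹ i))} : Set (Fin k → ℝ))
      = {x : Fin k → ℝ | (∑ i, x i) = (∑ i, lam i) ∧
          (∑ i ∈ U, x i) = ∑ i ∈ U, lam (σ⁻¹ i)} := by
  classical
  set S : Set (Fin k → ℝ) := {x : Fin k → ℝ | ∃ τ : Equiv.Perm (Fin k),
      (∀ i, i ∈ U ↔ τ i ∈ U) ∧ x = fun i => lam (σ⁻¹ (τ⁻¹ i))} with hSdef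
  set μ : Fin k → ℝ := fun i => lam (σ⁻¹ i) with hμdef
  have hμS : μ ∈ S := ⟨1, fun i => Iff.rfl, rfl⟩
  -- every element of S satisfies the two equations
  have hSsub : S ⊆ {x : Fin k → ℝ | (∑ i, x i) = (∑ i, lam i) ∧
          (∑ i ∈ U, x i) = ∑ i ∈ U, lam (σ⁻¹ i)} := by
    rintro x ⟨τ, hτ, rfl⟩
    constructor
    · exact Equiv.sum_comp (τ⁻¹.trans σ⁻¹) lam
    · refine Finset.sum_equiv τ.symm (fun i => ?_) (fun i _ => rfl)
      have h := hτ (τ.symm i)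
      rw [Equiv.apply_symm_apply] at h
      exact h.symm
  -- the RHS as an affine subspace
  have hWsub : ∀ (c : ℝ) (p₁ p₂ p₃ : Fin k → ℝ),
      p₁ ∈ {x : Fin k → ℝ | (∑ i, x i) = (∑ i, lam i) ∧
          (∑ i ∈ U, x i) = ∑ i ∈ U, lam (σ⁻¹ i)} →
      p₂ ∈ {x : Fin k → ℝ | (∑ i, x i) = (∑ i, lam i) ∧
          (∑ i ∈ U, x i) = ∑ i ∈ U, lam (σ⁻¹ i)} →
      p₃ ∈ {x : Fin k → ℝ | (∑ i, x i) = (∑ i, lam i) ∧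
          (∑ i ∈ U, x i) = ∑ i ∈ U, lam (σ⁻¹ i)} →
      c • (p₁ -ᵥ p₂) +ᵥ p₃ ∈ {x : Fin k → ℝ | (∑ i, x i) = (∑ i, lam i) ∧
          (∑ i ∈ U, x i) = ∑ i ∈ U, lam (σ⁻¹ i)} := by
    rintro c p₁ p₂ p₃ ⟨h1, h1'⟩ ⟨h2, h2'⟩ ⟨h3, h3'⟩
    have : ∀ T : Finset (Fin k), ∑ i ∈ T, (c • (p₁ -ᵥ p₂) +ᵥ p₃) i
        = c * (∑ i ∈ T, p₁ i - ∑ i ∈ T, p₂ i) + ∑ i ∈ T, p₃ i := by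
      intro T
      simp [Finset.sum_add_distrib, Finset.sum_sub_distrib, Finset.mul_sum, mul_sub]
    constructor
    · rw [this, h1, h2, h3]; ring
    · rw [this, h1', h2', h3']; ring
  set W : AffineSubspace ℝ (Fin k → ℝ) :=
    { carrier := {x : Fin k → ℝ | (∑ i, x i) = (∑ i, lam i) ∧
          (∑ i ∈ U, x i) = ∑ i ∈ U, lam (σ⁻¹ i)}
      smul_vsub_vadd_mem' := hWsub } with hWdef
  apply subset_antisymm
  · have h1 : affineSpan ℝ S ≤ W := affineSpan_le.mpr hSsub
    exact fun x hx => h1 hx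
  -- reverse inclusion
  set D : Submodule ℝ (Fin k → ℝ) := (affineSpan ℝ S).direction with hDdef
  have hμspan : μ ∈ affineSpan ℝ S := subset_affineSpan ℝ S hμS
  -- key: differences of basis vectors within U or within Uᶜ lie in D
  have key : ∀ i₀ j : Fin k, (i₀ ∈ U ↔ j ∈ U) →
      (Pi.single j 1 - Pi.single i₀ 1 : Fin k → ℝ) ∈ D := by
    intro i₀ j hij
    rcases eq_or_ne i₀ j with rfl | hne
    · simp
    set τ : Equiv.Perm (Fin k) := Equiv.swap i₀ j with hτdef
    have hτU : ∀ i, i ∈ U ↔ τ i ∈ U := by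
      intro i
      rcases eq_or_ne i i₀ with rfl | h1
      · simpa [hτdef, Equiv.swap_apply_left] using hij
      rcases eq_or_ne i j with rfl | h2
      · simpa [hτdef, Equiv.swap_apply_right] using hij.symm
      · simp [hτdef, Equiv.swap_apply_of_ne_of_ne h1 h2]
    have hxS : (fun i => lam (σ⁻¹ (τ i))) ∈ S := by
      refine ⟨τ, hτU, ?_⟩
      simp [hτdef, Equiv.swap_inv]
    have hvD : (fun i => lam (σ⁻¹ (τ i))) - μ ∈ D :=
      AffineSubspace.vsub_mem_direction (subset_affineSpan ℝ S hxS) hμspan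
    set c : ℝ := lam (σ⁻¹ j) - lam (σ⁻¹ i₀) with hcdef
    have hc : c ≠ 0 := by
      have : σ⁻¹ j ≠ σ⁻¹ i₀ := fun h => hne ((σ⁻¹).injective h).symm
      exact sub_ne_zero.mpr fun h => this (hlam.injective h)
    have heq' : (fun i => lam (σ⁻¹ (τ i))) - μ
        = c • (Pi.single i₀ 1 - Pi.single j 1 : Fin k → ℝ) := by
      funext i
      rcases eq_or_ne i i₀ with rfl | h1
      · simp [hτdef, Equiv.swap_apply_left, Pi.single_apply, hne.symm, hcdef, hμdef]
      rcases eq_or_ne i j with rfl | h2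
      · simp [hτdef, Equiv.swap_apply_right, Pi.single_apply, hne, hcdef, hμdef]
      · simp [hτdef, Equiv.swap_apply_of_ne_of_ne h1 h2, Pi.single_apply, h1, h2, hμdef]
    have heq : (Pi.single j 1 - Pi.single i₀ 1 : Fin k → ℝ)
        = (-c⁻¹) • ((fun i => lam (σ⁻¹ (τ i))) - μ) := by
      rw [heq', smul_smul, neg_mul, inv_mul_cancel₀ hc, neg_smul, one_smul, neg_sub]
    rw [heq]
    exact D.smul_mem _ hvD
  -- vectors supported on T with zero sum lie in D
  have spanlem : ∀ (T : Finset (Fin k)) (i₀ : Fin k), i₀ ∈ T →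
      (∀ j ∈ T, (i₀ ∈ U ↔ j ∈ U)) →
      ∀ v : Fin k → ℝ, (∑ i ∈ T, v i) = 0 →
      (fun i => if i ∈ T then v i else 0) ∈ D := by
    intro T i₀ hi₀ hTU v hv
    have heq : (fun i => if i ∈ T then v i else 0)
        = ∑ j ∈ T, v j • (Pi.single j 1 - Pi.single i₀ 1 : Fin k → ℝ) := by
      funext i
      rw [Finset.sum_apply]
      have h1 : ∀ j ∈ T, (v j • (Pi.single j 1 - Pi.single i₀ 1 : Fin k → ℝ)) i
          = (if i = j then v j else 0) - v j * (if i = i₀ then 1 else 0) := by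
        intro j _
        simp [Pi.single_apply, mul_sub, mul_ite]
      rw [Finset.sum_congr rfl h1, Finset.sum_sub_distrib, Finset.sum_ite_eq T i v,
        ← Finset.sum_mul, hv, zero_mul, sub_zero]
    rw [heq]
    exact Submodule.sum_mem _ fun j hj => D.smul_mem _ (key i₀ j (hTU j hj))
  -- now the inclusion
  intro x hx
  obtain ⟨hx1, hx2⟩ := hx
  set v : Fin k → ℝ := x - μ with hvdef
  have hvU : (∑ i ∈ U, v i) = 0 := by
    simp [hvdef, Finset.sum_sub_distrib, hx2, hμdef]
  have hvtot : (∑ i, v i) = 0 := by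
    have : (∑ i, μ i) = ∑ i, lam i := Equiv.sum_comp σ⁻¹ lam
    simp [hvdef, Finset.sum_sub_distrib, hx1, this]
  have hvC : (∑ i ∈ Uᶜ, v i) = 0 := by
    have := Finset.sum_add_sum_compl U v
    rw [hvU, zero_add] at this
    rw [this, hvtot]
  obtain ⟨i₀, hi₀⟩ := Finset.card_pos.mp hU1
  have hUc : Uᶜ.Nonempty := by
    rw [← Finset.card_pos, Finset.card_compl, Fintype.card_fin]
    omega
  obtain ⟨j₀, hj₀⟩ := hUc
  have hj₀' : j₀ ∉ U := Finset.mem_compl.mp hj₀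
  have hvU_mem : (fun i => if i ∈ U then v i else 0) ∈ D :=
    spanlem U i₀ hi₀ (fun j hj => by simp [hi₀, hj]) v hvU
  have hvC_mem : (fun i => if i ∈ Uᶜ then v i else 0) ∈ D :=
    spanlem Uᶜ j₀ hj₀ (fun j hj => by
      simp only [Finset.mem_compl] at hj
      simp [hj₀', hj]) v hvC
  have hvD : v ∈ D := by
    have : v = (fun i => if i ∈ U then v i else 0) + (fun i => if i ∈ Uᶜ then v i else 0) := by
      funext i
      by_cases h : i ∈ U <;> simp [h]
    rw [this]
    exact D.add_mem hvU_mem hvC_mem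
  have : x = v +ᵥ μ := by
    funext i
    simp [hvdef]
  rw [this]
  exact AffineSubspace.vadd_mem_of_mem_direction hvD hμspan
end

section
/- In ℝ⁶ with coordinates (λ₁,λ₂,λ₃,β₁,β₂,β₃), define the vectors b = (1,0,−1,0,0,0), a₁ = (2,−1,−1,2,−1,−1), a₂ = (2,−1,−1,−1,2,−1), a₃ = (2,−1,−1,−1,−1,2), c₁ = (1,1,−2,−2,1,1), c₂ = (1,1,−2,1,−2,1), c₃ = (1,1,−2,1,1,−2), and for vectors v₁,…,v₄ let pos(v₁,…,v₄) denote the set of their linear combinations with nonnegative real coefficients. Then for all λ, β ∈ ℤ³ with λ₁+λ₂+λ₃ = 0 and β₁+β₂+β₃ = 0, the weight multiplicity m_λ(β) (the number of Gelfand–Tsetlin patterns with top row λ and weight β) satisfies: if (λ,β) ∈ pos(b,a₁,a₂,a₃) then m_λ(β) = 1+λ₂−λ₃; if (λ,β) ∈ pos(b,c₁,c₂,c₃) then m_λ(β) = 1+λ₁−λ₂; if (λ,β) ∈ pos(b,a₁,c₂,c₃) then m_λ(β) = 1+λ₁−β₁; if (λ,β) ∈ pos(b,a₂,c₁,c₃)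 then m_λ(β) = 1+λ₁−β₂; if (λ,β) ∈ pos(b,a₃,c₁,c₂) then m_λ(β) = 1+λ₁−β₃; if (λ,β) ∈ pos(b,a₁,a₂,c₃) then m_λ(β) = 1+λ₁+λ₂+β₃; if (λ,β) ∈ pos(b,a₁,a₃,c₂) then m_λ(β) = 1+λ₁+λ₂+β₂; if (λ,β) ∈ pos(b,a₂,a₃,c₁) then m_λ(β) = 1+λ₁+λ₂+β₁. -/
/-- The cone spanned by four vectors in `ℝ⁶`: all linear combinations with nonnegative
real coefficients. -/
def pos4 (v₁ v₂ v₃ v₄ : Fin 6 → ℝ) : Set (Fin 6 → ℝ) :=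
  {x | ∃ c₁ c₂ c₃ c₄ : ℝ, 0 ≤ c₁ ∧ 0 ≤ c₂ ∧ 0 ≤ c₃ ∧ 0 ≤ c₄ ∧
    x = c₁ • v₁ + c₂ • v₂ + c₃ • v₃ + c₄ • v₄}

/-!
A Gelfand–Tsetlin pattern for `sl₃` with top row `lam` and weight `beta` is determined by the
first entry `t` of its middle row: the bottom entry is `beta 0` and the middle row sums to
`beta 0 + beta 1`. Interlacing confines `t` to an interval whose lower end is the largest of
`lam 1, beta 0 + beta 1 - lam 1, beta 0, beta 1` and whose upper end is the smaller of
`lam 0, beta 0 + beta 1 - lam 2`, so `m_λ(β)` is one plus the length of this interval, or zero.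
Each of the eight cones is simplicial, and its four facets, read off from the generators, decide
which bound is extremal on it; this turns the count into the stated linear polynomial.
-/

def gtPatternOfMiddle (lam beta : Fin 3 → ℤ) (t : ℤ) : ℕ → ℕ → ℤ
  | 0, 0 => beta 0
  | 1, 0 => t
  | 1, 1 => beta 0 + beta 1 - t
  | 2, 0 => lam 0
  | 2, 1 => lam 1
  | 2, 2 => lam 2
  | _, _ => 0

def gtMiddleLower (lam beta : Fin 3 → ℤ) : ℤ :=
  max (max (lam 1) (beta 0 + beta 1 - lam 1)) (max (beta 0) (beta 1))

def gtMiddleUpper (lam beta : Fin 3 → ℤ) : ℤ :=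
  min (lam 0) (beta 0 + beta 1 - lam 2)

theorem gtPatternOfMiddle_injective (lam beta : Fin 3 → ℤ) :
    Function.Injective (gtPatternOfMiddle lam beta) :=
  fun s t h => by simpa [gtPatternOfMiddle] using congrFun (congrFun h 1) 0

theorem eq_gtPatternOfMiddle {lam beta : Fin 3 → ℤ} {x : ℕ → ℕ → ℤ}
    (hx : IsGTPattern 3 lam x) (hw : GTHasWeight 3 beta x) :
    x = gtPatternOfMiddle lam beta (x 1 0) := by
  obtain ⟨htop, -, hzero⟩ := hx
  have hw₀ : x 0 0 = beta 0 := by simpa [Fin.sum_univ_three] using hw 0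
  have hw₁ : x 1 0 + x 1 1 = beta 0 + beta 1 := by
    simpa [Fin.sum_univ_three, Finset.sum_range_succ] using hw 1
  funext i j
  match i, j with
  | 0, 0 => exact hw₀
  | 1, 0 => rfl
  | 1, 1 => show x 1 1 = beta 0 + beta 1 - x 1 0; omega
  | 2, 0 => exact htop 0
  | 2, 1 => exact htop 1
  | 2, 2 => exact htop 2
  | 0, _ + 1 | 1, _ + 2 | 2, _ + 3 | _ + 3, _ => exact hzero _ _ (by omega)

theorem gtHasWeight_gtPatternOfMiddle {lam beta : Fin 3 → ℤ} (t : ℤ)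
    (hsum : lam 0 + lam 1 + lam 2 = beta 0 + beta 1 + beta 2) :
    GTHasWeight 3 beta (gtPatternOfMiddle lam beta t) := by
  intro m
  fin_cases m <;> simp [gtPatternOfMiddle, Fin.sum_univ_three, Finset.sum_range_succ, hsum]

theorem isGTPattern_gtPatternOfMiddle_iff {lam beta : Fin 3 → ℤ} {t : ℤ} :
    IsGTPattern 3 lam (gtPatternOfMiddle lam beta t) ↔
      t ∈ Set.Icc (gtMiddleLower lam beta) (gtMiddleUpper lam beta) := by
  constructor
  · rintro ⟨-, hle, -⟩
    obtain ⟨h₁, h₂⟩ := hle 0 0 (by norm_num) le_rfl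
    obtain ⟨h₃, h₄⟩ := hle 1 0 (by norm_num) (by norm_num)
    obtain ⟨h₅, h₆⟩ := hle 1 1 (by norm_num) le_rfl
    simp only [gtPatternOfMiddle] at h₁ h₂ h₃ h₄ h₅ h₆
    simp only [Set.mem_Icc, gtMiddleLower, gtMiddleUpper, max_le_iff, le_min_iff]
    omega
  · intro ht
    simp only [Set.mem_Icc, gtMiddleLower, gtMiddleUpper, max_le_iff, le_min_iff] at ht
    refine ⟨fun j => by fin_cases j <;> rfl, fun i j hi hj => ?_, fun i j hij => ?_⟩
    · have : i < 2 := by omega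
      interval_cases i <;> interval_cases j <;> simp only [gtPatternOfMiddle] <;> omega
    · match i, j with
      | 0, 0 | 1, 0 | 1, 1 | 2, 0 | 2, 1 | 2, 2 => omega
      | 0, _ + 1 | 1, _ + 2 | 2, _ + 3 | _ + 3, _ => rfl

theorem gtMult_three {lam beta : Fin 3 → ℤ}
    (hsum : lam 0 + lam 1 + lam 2 = beta 0 + beta 1 + beta 2) :
    gtMult 3 lam beta = (gtMiddleUpper lam beta + 1 - gtMiddleLower lam beta).toNat := by
  have hset : {x | IsGTPattern 3 lam x ∧ GTHasWeight 3 beta x} =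
      gtPatternOfMiddle lam beta '' Set.Icc (gtMiddleLower lam beta) (gtMiddleUpper lam beta) := by
    ext x
    constructor
    · rintro ⟨hx, hw⟩
      have hx_eq := eq_gtPatternOfMiddle hx hw
      rw [hx_eq] at hx
      exact ⟨x 1 0, isGTPattern_gtPatternOfMiddle_iff.mp hx, hx_eq.symm⟩
    · rintro ⟨t, ht, rfl⟩
      exact ⟨isGTPattern_gtPatternOfMiddle_iff.mpr ht, gtHasWeight_gtPatternOfMiddle t hsum⟩
  rw [gtMult, hset, Set.ncard_image_of_injective _ (gtPatternOfMiddle_injective lam beta),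
    ← Finset.coe_Icc, Set.ncard_coe_finset, Int.card_Icc]

namespace SL3

def b : Fin 6 → ℝ := ![1, 0, -1, 0, 0, 0]
def a₁ : Fin 6 → ℝ := ![2, -1, -1, 2, -1, -1]
def a₂ : Fin 6 → ℝ := ![2, -1, -1, -1, 2, -1]
def a₃ : Fin 6 → ℝ := ![2, -1, -1, -1, -1, 2]
def c₁ : Fin 6 → ℝ := ![1, 1, -2, -2, 1, 1]
def c₂ : Fin 6 → ℝ := ![1, 1, -2, 1, -2, 1]
def c₃ : Fin 6 → ℝ := ![1, 1, -2, 1, 1, -2]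

def point (lam beta : Fin 3 → ℤ) : Fin 6 → ℝ :=
  ![(lam 0 : ℝ), (lam 1 : ℝ), (lam 2 : ℝ), (beta 0 : ℝ), (beta 1 : ℝ), (beta 2 : ℝ)]

variable (lam beta : Fin 3 → ℤ)

theorem facets_of_mem_pos4_b_a₁_a₂_a₃ (h : point lam beta ∈ pos4 b a₁ a₂ a₃) :
    lam 2 ≤ lam 1 ∧ lam 1 ≤ beta 0 ∧ lam 1 ≤ beta 1 ∧ lam 1 ≤ beta 2 := by
  obtain ⟨d₁, d₂, d₃, d₄, h₁, h₂, h₃, h₄, h⟩ := h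
  simp only [funext_iff, Fin.forall_fin_succ, IsEmpty.forall_iff, and_true, point, b, a₁, a₂, a₃,
    Pi.add_apply, Pi.smul_apply, smul_eq_mul, Matrix.cons_val_zero, Matrix.cons_val_succ] at h
  obtain ⟨e₀, e₁, e₂, e₃, e₄, e₅⟩ := h
  refine ⟨?_, ?_, ?_, ?_⟩ <;> exact (Int.cast_le (R := ℝ)).mp (by linarith)

theorem facets_of_mem_pos4_b_c₁_c₂_c₃ (h : point lam beta ∈ pos4 b c₁ c₂ c₃) :
    lam 1 ≤ lam 0 ∧ beta 0 ≤ lam 1 ∧ beta 1 ≤ lam 1 ∧ beta 2 ≤ lam 1 := by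
  obtain ⟨d₁, d₂, d₃, d₄, h₁, h₂, h₃, h₄, h⟩ := h
  simp only [funext_iff, Fin.forall_fin_succ, IsEmpty.forall_iff, and_true, point, b, c₁, c₂, c₃,
    Pi.add_apply, Pi.smul_apply, smul_eq_mul, Matrix.cons_val_zero, Matrix.cons_val_succ] at h
  obtain ⟨e₀, e₁, e₂, e₃, e₄, e₅⟩ := h
  refine ⟨?_, ?_, ?_, ?_⟩ <;> exact (Int.cast_le (R := ℝ)).mp (by linarith)

theorem facets_of_mem_pos4_b_a₁_c₂_c₃ (h : point lam beta ∈ pos4 b a₁ c₂ c₃) :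
    beta 0 ≤ lam 0 ∧ lam 1 ≤ beta 0 ∧ beta 1 ≤ lam 1 ∧ beta 2 ≤ lam 1 := by
  obtain ⟨d₁, d₂, d₃, d₄, h₁, h₂, h₃, h₄, h⟩ := h
  simp only [funext_iff, Fin.forall_fin_succ, IsEmpty.forall_iff, and_true, point, b, a₁, c₂, c₃,
    Pi.add_apply, Pi.smul_apply, smul_eq_mul, Matrix.cons_val_zero, Matrix.cons_val_succ] at h
  obtain ⟨e₀, e₁, e₂, e₃, e₄, e₅⟩ := h
  refine ⟨?_, ?_, ?_, ?_⟩ <;> exact (Int.cast_le (R := ℝ)).mp (by linarith)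

theorem facets_of_mem_pos4_b_a₂_c₁_c₃ (h : point lam beta ∈ pos4 b a₂ c₁ c₃) :
    beta 1 ≤ lam 0 ∧ lam 1 ≤ beta 1 ∧ beta 0 ≤ lam 1 ∧ beta 2 ≤ lam 1 := by
  obtain ⟨d₁, d₂, d₃, d₄, h₁, h₂, h₃, h₄, h⟩ := h
  simp only [funext_iff, Fin.forall_fin_succ, IsEmpty.forall_iff, and_true, point, b, a₂, c₁, c₃,
    Pi.add_apply, Pi.smul_apply, smul_eq_mul, Matrix.cons_val_zero, Matrix.cons_val_succ] at h
  obtain ⟨e₀, e₁, e₂, e₃, e₄, e₅⟩ := h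
  refine ⟨?_, ?_, ?_, ?_⟩ <;> exact (Int.cast_le (R := ℝ)).mp (by linarith)

theorem facets_of_mem_pos4_b_a₃_c₁_c₂ (h : point lam beta ∈ pos4 b a₃ c₁ c₂) :
    beta 2 ≤ lam 0 ∧ lam 1 ≤ beta 2 ∧ beta 0 ≤ lam 1 ∧ beta 1 ≤ lam 1 := by
  obtain ⟨d₁, d₂, d₃, d₄, h₁, h₂, h₃, h₄, h⟩ := h
  simp only [funext_iff, Fin.forall_fin_succ, IsEmpty.forall_iff, and_true, point, b, a₃, c₁, c₂,
    Pi.add_apply, Pi.smul_apply, smul_eq_mul, Matrix.cons_val_zero, Matrix.cons_val_succ] at h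
  obtain ⟨e₀, e₁, e₂, e₃, e₄, e₅⟩ := h
  refine ⟨?_, ?_, ?_, ?_⟩ <;> exact (Int.cast_le (R := ℝ)).mp (by linarith)

theorem facets_of_mem_pos4_b_a₁_a₂_c₃ (h : point lam beta ∈ pos4 b a₁ a₂ c₃) :
    lam 2 ≤ beta 2 ∧ lam 1 ≤ beta 0 ∧ lam 1 ≤ beta 1 ∧ beta 2 ≤ lam 1 := by
  obtain ⟨d₁, d₂, d₃, d₄, h₁, h₂, h₃, h₄, h⟩ := h
  simp only [funext_iff, Fin.forall_fin_succ, IsEmpty.forall_iff, and_true, point, b, a₁, a₂, c₃,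
    Pi.add_apply, Pi.smul_apply, smul_eq_mul, Matrix.cons_val_zero, Matrix.cons_val_succ] at h
  obtain ⟨e₀, e₁, e₂, e₃, e₄, e₅⟩ := h
  refine ⟨?_, ?_, ?_, ?_⟩ <;> exact (Int.cast_le (R := ℝ)).mp (by linarith)

theorem facets_of_mem_pos4_b_a₁_a₃_c₂ (h : point lam beta ∈ pos4 b a₁ a₃ c₂) :
    lam 2 ≤ beta 1 ∧ lam 1 ≤ beta 0 ∧ lam 1 ≤ beta 2 ∧ beta 1 ≤ lam 1 := by
  obtain ⟨d₁, d₂, d₃, d₄, h₁, h₂, h₃, h₄, h⟩ := h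
  simp only [funext_iff, Fin.forall_fin_succ, IsEmpty.forall_iff, and_true, point, b, a₁, a₃, c₂,
    Pi.add_apply, Pi.smul_apply, smul_eq_mul, Matrix.cons_val_zero, Matrix.cons_val_succ] at h
  obtain ⟨e₀, e₁, e₂, e₃, e₄, e₅⟩ := h
  refine ⟨?_, ?_, ?_, ?_⟩ <;> exact (Int.cast_le (R := ℝ)).mp (by linarith)

theorem facets_of_mem_pos4_b_a₂_a₃_c₁ (h : point lam beta ∈ pos4 b a₂ a₃ c₁) :
    lam 2 ≤ beta 0 ∧ lam 1 ≤ beta 1 ∧ lam 1 ≤ beta 2 ∧ beta 0 ≤ lam 1 := by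
  obtain ⟨d₁, d₂, d₃, d₄, h₁, h₂, h₃, h₄, h⟩ := h
  simp only [funext_iff, Fin.forall_fin_succ, IsEmpty.forall_iff, and_true, point, b, a₂, a₃, c₁,
    Pi.add_apply, Pi.smul_apply, smul_eq_mul, Matrix.cons_val_zero, Matrix.cons_val_succ] at h
  obtain ⟨e₀, e₁, e₂, e₃, e₄, e₅⟩ := h
  refine ⟨?_, ?_, ?_, ?_⟩ <;> exact (Int.cast_le (R := ℝ)).mp (by linarith)

end SL3

/-- The chamber complex of the weight multiplicity function of `sl₃`: on each of the eight
maximal cones (in `(λ,β)`-coordinates) spanned by `b, a₁, a₂, a₃, c₁, c₂, c₃`, the weight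
multiplicity `m_λ(β)` is given by the stated linear polynomial. -/
theorem sl3_chamber_complex_polynomials (lam beta : Fin 3 → ℤ)
    (hl : lam 0 + lam 1 + lam 2 = 0) (hb : beta 0 + beta 1 + beta 2 = 0) :
    let b : Fin 6 → ℝ := ![1, 0, -1, 0, 0, 0]
    let a₁ : Fin 6 → ℝ := ![2, -1, -1, 2, -1, -1]
    let a₂ : Fin 6 → ℝ := ![2, -1, -1, -1, 2, -1]
    let a₃ : Fin 6 → ℝ := ![2, -1, -1, -1, -1, 2]
    let c₁ : Fin 6 → ℝ := ![1, 1, -2, -2, 1, 1]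
    let c₂ : Fin 6 → ℝ := ![1, 1, -2, 1, -2, 1]
    let c₃ : Fin 6 → ℝ := ![1, 1, -2, 1, 1, -2]
    let z : Fin 6 → ℝ :=
      ![(lam 0 : ℝ), (lam 1 : ℝ), (lam 2 : ℝ), (beta 0 : ℝ), (beta 1 : ℝ), (beta 2 : ℝ)]
    (z ∈ pos4 b a₁ a₂ a₃ → (gtMult 3 lam beta : ℤ) = 1 + lam 1 - lam 2) ∧
    (z ∈ pos4 b c₁ c₂ c₃ → (gtMult 3 lam beta : ℤ) = 1 + lam 0 - lam 1) ∧
    (z ∈ pos4 b a₁ c₂ c₃ → (gtMult 3 lam beta : ℤ) = 1 + lam 0 - beta 0) ∧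
    (z ∈ pos4 b a₂ c₁ c₃ → (gtMult 3 lam beta : ℤ) = 1 + lam 0 - beta 1) ∧
    (z ∈ pos4 b a₃ c₁ c₂ → (gtMult 3 lam beta : ℤ) = 1 + lam 0 - beta 2) ∧
    (z ∈ pos4 b a₁ a₂ c₃ → (gtMult 3 lam beta : ℤ) = 1 + lam 0 + lam 1 + beta 2) ∧
    (z ∈ pos4 b a₁ a₃ c₂ → (gtMult 3 lam beta : ℤ) = 1 + lam 0 + lam 1 + beta 1) ∧
    (z ∈ pos4 b a₂ a₃ c₁ → (gtMult 3 lam beta : ℤ) = 1 + lam 0 + lam 1 + beta 0) := by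
  intro b a₁ a₂ a₃ c₁ c₂ c₃ z
  have hsum : lam 0 + lam 1 + lam 2 = beta 0 + beta 1 + beta 2 := by rw [hl, hb]
  rw [gtMult_three hsum, gtMiddleLower, gtMiddleUpper]
  refine ⟨fun h => ?_, fun h => ?_, fun h => ?_, fun h => ?_,
    fun h => ?_, fun h => ?_, fun h => ?_, fun h => ?_⟩
  · obtain ⟨_, _, _, _⟩ := SL3.facets_of_mem_pos4_b_a₁_a₂_a₃ lam beta h; omega
  · obtain ⟨_, _, _, _⟩ := SL3.facets_of_mem_pos4_b_c₁_c₂_c₃ lam beta h; omega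
  · obtain ⟨_, _, _, _⟩ := SL3.facets_of_mem_pos4_b_a₁_c₂_c₃ lam beta h; omega
  · obtain ⟨_, _, _, _⟩ := SL3.facets_of_mem_pos4_b_a₂_c₁_c₃ lam beta h; omega
  · obtain ⟨_, _, _, _⟩ := SL3.facets_of_mem_pos4_b_a₃_c₁_c₂ lam beta h; omega
  · obtain ⟨_, _, _, _⟩ := SL3.facets_of_mem_pos4_b_a₁_a₂_c₃ lam beta h; omega
  · obtain ⟨_, _, _, _⟩ := SL3.facets_of_mem_pos4_b_a₁_a₃_c₂ lam beta h; omega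
  · obtain ⟨_, _, _, _⟩ := SL3.facets_of_mem_pos4_b_a₂_a₃_c₁ lam beta h; omega
end
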